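/- arXiv:0709.0232 — 7 statements merged into one kernel-verified Lean document; each statement's English description precedes it below -/
import Mathlib

section
/- Let (Ω, F, P) be a probability space with a filtration (F_t)_{0 ≤ t ≤ T} such that F_0 is P-trivial (every A ∈ F_0 has P(A) ∈ {0,1}). Suppose that for every pair 0 ≤ s ≤ t ≤ T we are given a map π_{st} : L^∞(F_t) → L^∞(F_s) satisfying: (A1) each π_{st} is a bounded, positive (Y ≥ 0 a.s. implies π_{st}(Y) ≥ 0 a.s.), linear operator; (A2) for every Y ∈ L^∞(F_t) with Y ≥ 0 a.s., π_{0t}(Y) = 0 a.s. if and only if Y = 0 a.s.; (A3) for all 0 ≤ s ≤ t ≤ u ≤ T, Y ∈ L^∞(F_u) and X ∈ L^∞(F_t), π_{su}(XY) = π_{st}(X·π_{tu}(Y)); (A4) if Y_n ∈ L^∞(F_t), |Y_n| ≤ 1 a.s. and Y_n ↑ Y pointwise a.s., then π_{st}(Y_n) ↑ π_{st}(Y) a.s. Then there exists a family (ζ_t)_{0 ≤ t ≤ T} of integrable random variables with each ζ_t F_t-measurable and ζ_t > 0 a.s., such that for all 0 ≤ s ≤ t ≤ T and all Y ∈ L^∞(F_t),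 ζ_s · π_{st}(Y) = E[ζ_t Y | F_s] almost surely (here L^∞(F_0) is identified with ℝ via the triviality of F_0). -/
/-! For each `t`, the set function `A ↦ E[π_{0t}(1_A)]` on `𝔽_t` is countably additive by (A4)
and absolutely continuous with respect to `P`; its Radon–Nikodym derivative `ζ_t` represents
`Y ↦ E[π_{0t}(Y)]` on all of `L^∞(𝔽_t)` by a monotone class argument, and (A2) makes it strictly
positive. For `A ∈ 𝔽_s`, (A3) gives `E[π_{0s}(1_A π_{st}(Y))] = E[π_{0t}(1_A Y)]`, that is
`E[1_A ζ_s π_{st}(Y)] = E[1_A ζ_t Y]`, which is the defining property of `E[ζ_t Y | 𝔽_s]`. -/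

open MeasureTheory Filter

/-- `X` is (a representative of an element of) `L^∞` of the σ-algebra `m`: it is
`m`-measurable and bounded. -/
def MemLinf {Ω : Type*} (m : MeasurableSpace Ω) (X : Ω → ℝ) : Prop :=
  Measurable[m] X ∧ ∃ C : ℝ, ∀ ω, |X ω| ≤ C

open scoped ENNReal Topology
open Function

namespace MemLinf

variable {Ω : Type*} {m : MeasurableSpace Ω} {X Y : Ω → ℝ}

lemma indicator_one {A : Set Ω} (hA : MeasurableSet[m] A) : MemLinf m (A.indicator 1) :=
  ⟨measurable_one.indicator hA, 1, fun ω => by by_cases h : ω ∈ A <;> simp [h]⟩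

lemma zero : MemLinf m 0 :=
  ⟨measurable_const, 0, fun ω => by simp⟩

lemma mono {m' : MeasurableSpace Ω} (hm : m ≤ m') (hX : MemLinf m X) : MemLinf m' X :=
  ⟨hX.1.mono hm le_rfl, hX.2⟩

lemma add (hX : MemLinf m X) (hY : MemLinf m Y) : MemLinf m (X + Y) := by
  obtain ⟨hXm, C, hC⟩ := hX
  obtain ⟨hYm, D, hD⟩ := hY
  exact ⟨hXm.add hYm, C + D, fun ω => (abs_add_le _ _).trans (add_le_add (hC ω) (hD ω))⟩

lemma const_smul (c : ℝ) (hX : MemLinf m X) : MemLinf m (c • X) := by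
  obtain ⟨hXm, C, hC⟩ := hX
  refine ⟨hXm.const_smul c, |c| * C, fun ω => ?_⟩
  simpa [abs_mul] using mul_le_mul_of_nonneg_left (hC ω) (abs_nonneg c)

lemma mul (hX : MemLinf m X) (hY : MemLinf m Y) : MemLinf m (X * Y) := by
  obtain ⟨hXm, C, hC⟩ := hX
  obtain ⟨hYm, D, hD⟩ := hY
  refine ⟨hXm.mul hYm, C * D, fun ω => ?_⟩
  rw [Pi.mul_apply, abs_mul]
  exact mul_le_mul (hC ω) (hD ω) (abs_nonneg _) ((abs_nonneg _).trans (hC ω))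

lemma finset_sum {ι : Type*} (s : Finset ι) {X : ι → Ω → ℝ} (hX : ∀ i ∈ s, MemLinf m (X i)) :
    MemLinf m (∑ i ∈ s, X i) := by
  classical
  induction s using Finset.induction_on with
  | empty => simpa using zero
  | insert i s hi ih =>
    rw [Finset.sum_insert hi]
    exact (hX i (s.mem_insert_self i)).add (ih fun j hj => hX j (Finset.mem_insert_of_mem hj))

variable {F : MeasurableSpace Ω} {μ : Measure Ω}

lemma integrable_mul {z : Ω → ℝ} (hm : m ≤ F) (hz : Integrable z μ) (hX : MemLinf m X) :
    Integrable (fun ω => z ω * X ω) μ := by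
  obtain ⟨hXm, C, hC⟩ := hX
  exact hz.mul_bdd (hXm.mono hm le_rfl).aestronglyMeasurable (ae_of_all _ hC)

lemma integrable [IsFiniteMeasure μ] (hm : m ≤ F) (hX : MemLinf m X) : Integrable X μ := by
  simpa using integrable_mul hm (integrable_const (1 : ℝ)) hX

end MemLinf

section

variable {Ω : Type*}

lemma MeasureTheory.SimpleFunc.memLinf {m : MeasurableSpace Ω} (φ : SimpleFunc Ω ℝ) :
    MemLinf m φ := by
  obtain ⟨C, hC⟩ := (φ.map fun x => |x|).exists_forall_le
  exact ⟨φ.measurable, C, fun ω => by simpa using hC ω⟩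

lemma exists_simpleFunc_monotone_tendsto {m : MeasurableSpace Ω} {W : Ω → ℝ}
    (hW : Measurable W) (hW0 : ∀ ω, 0 ≤ W ω) (hW1 : ∀ ω, W ω ≤ 1) :
    ∃ φ : ℕ → SimpleFunc Ω ℝ, (∀ n ω, |φ n ω| ≤ 1) ∧ (∀ ω, Monotone (φ · ω)) ∧
      ∀ ω, Tendsto (φ · ω) atTop (𝓝 (W ω)) := by
  set V : Ω → ℝ≥0∞ := fun ω => ENNReal.ofReal (W ω)
  have hV : Measurable V := hW.ennreal_ofReal
  have hle : ∀ n ω, SimpleFunc.eapprox V n ω ≤ V ω := fun n ω => by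
    rw [← SimpleFunc.iSup_eapprox_apply hV]
    exact le_iSup (fun k => SimpleFunc.eapprox V k ω) n
  have hfin : ∀ n ω, SimpleFunc.eapprox V n ω ≠ ∞ := fun n ω =>
    (SimpleFunc.eapprox_lt_top V n ω).ne
  refine ⟨fun n => (SimpleFunc.eapprox V n).map ENNReal.toReal, fun n ω => ?_, fun ω k n hkn => ?_,
    fun ω => ?_⟩
  · rw [SimpleFunc.map_apply, abs_of_nonneg ENNReal.toReal_nonneg]
    exact ENNReal.toReal_le_of_le_ofReal zero_le_one
      ((hle n ω).trans (ENNReal.ofReal_le_ofReal (hW1 ω)))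
  · exact ENNReal.toReal_mono (hfin n ω) (SimpleFunc.monotone_eapprox V hkn ω)
  · have h := (ENNReal.tendsto_toReal ENNReal.ofReal_ne_top).comp (SimpleFunc.tendsto_eapprox hV ω)
    simpa [V, ENNReal.toReal_ofReal (hW0 ω), Function.comp_def] using h

lemma hasSum_indicator_one_apply {ι : Type*} {f : ι → Set Ω} (hd : Pairwise (Disjoint on f))
    (ω : Ω) : HasSum (fun i => (f i).indicator (1 : Ω → ℝ) ω) ((⋃ i, f i).indicator 1 ω) := by
  by_cases hω : ω ∈ ⋃ i, f i
  · obtain ⟨j, hj⟩ := Set.mem_iUnion.1 hω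
    rw [Set.indicator_of_mem hω, ← Set.indicator_of_mem hj (1 : Ω → ℝ)]
    refine hasSum_single j fun i hij => Set.indicator_of_notMem (fun hi => ?_) _
    exact Set.disjoint_left.1 (hd hij) hi hj
  · rw [Set.indicator_of_notMem hω]
    convert hasSum_zero with i
    exact Set.indicator_of_notMem (fun hi => hω (Set.mem_iUnion_of_mem i hi)) _

structure IsSigmaContinuousLinear (m : MeasurableSpace Ω) (Λ : (Ω → ℝ) → ℝ) : Prop where
  map_add : ∀ X Y, MemLinf m X → MemLinf m Y → Λ (X + Y) = Λ X + Λ Y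
  map_smul : ∀ (c : ℝ) X, MemLinf m X → Λ (c • X) = c * Λ X
  tendsto : ∀ (X : ℕ → Ω → ℝ) (Y : Ω → ℝ), (∀ n, MemLinf m (X n)) → MemLinf m Y →
    (∀ n ω, |X n ω| ≤ 1) → (∀ ω, Monotone (X · ω)) → (∀ ω, Tendsto (X · ω) atTop (𝓝 (Y ω))) →
    Tendsto (fun n => Λ (X n)) atTop (𝓝 (Λ Y))

namespace IsSigmaContinuousLinear

variable {m : MeasurableSpace Ω} {Λ Λ' : (Ω → ℝ) → ℝ}

lemma sub (hΛ : IsSigmaContinuousLinear m Λ) (hΛ' : IsSigmaContinuousLinear m Λ') :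
    IsSigmaContinuousLinear m (fun X => Λ X - Λ' X) where
  map_add X Y hX hY := by rw [hΛ.map_add X Y hX hY, hΛ'.map_add X Y hX hY]; ring
  map_smul c X hX := by rw [hΛ.map_smul c X hX, hΛ'.map_smul c X hX]; ring
  tendsto X Y hX hY h1 hmono hlim :=
    (hΛ.tendsto X Y hX hY h1 hmono hlim).sub (hΛ'.tendsto X Y hX hY h1 hmono hlim)

variable (hΛ : IsSigmaContinuousLinear m Λ)
include hΛ

lemma map_zero : Λ 0 = 0 := by
  simpa using hΛ.map_smul 0 0 .zero

lemma map_sum {ι : Type*} (s : Finset ι) {X : ι → Ω → ℝ} (hX : ∀ i ∈ s, MemLinf m (X i)) :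
    Λ (∑ i ∈ s, X i) = ∑ i ∈ s, Λ (X i) := by
  classical
  induction s using Finset.induction_on with
  | empty => simpa using hΛ.map_zero
  | insert i s hi ih =>
    have hXs : ∀ j ∈ s, MemLinf m (X j) := fun j hj => hX j (Finset.mem_insert_of_mem hj)
    rw [Finset.sum_insert hi, Finset.sum_insert hi, ← ih hXs,
      hΛ.map_add _ _ (hX i (s.mem_insert_self i)) (MemLinf.finset_sum s hXs)]

lemma hasSum_map_indicator_one {f : ℕ → Set Ω} (hf : ∀ i, MeasurableSet[m] (f i))
    (hd : Pairwise (Disjoint on f)) (hpos : ∀ i, 0 ≤ Λ ((f i).indicator 1)) :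
    HasSum (fun i => Λ ((f i).indicator 1)) (Λ ((⋃ i, f i).indicator 1)) := by
  set S : ℕ → Ω → ℝ := fun n => ∑ i ∈ Finset.range n, (f i).indicator 1
  have hS : ∀ n ω, S n ω = ∑ i ∈ Finset.range n, (f i).indicator 1 ω := fun n ω =>
    Finset.sum_apply ω _ _
  have hind : ∀ i ω, 0 ≤ (f i).indicator (1 : Ω → ℝ) ω := fun i ω =>
    Set.indicator_nonneg (fun _ _ => zero_le_one) ω
  have hSmem : ∀ n, MemLinf m (S n) := fun n =>
    MemLinf.finset_sum _ fun i _ => .indicator_one (hf i)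
  have hlim := hΛ.tendsto S _ hSmem (.indicator_one (.iUnion hf))
    (fun n ω => by
      rw [hS, abs_le]
      refine ⟨by linarith [Finset.sum_nonneg fun i (_ : i ∈ Finset.range n) => hind i ω], ?_⟩
      refine (sum_le_hasSum _ (fun i _ => hind i ω) (hasSum_indicator_one_apply hd ω)).trans ?_
      exact Set.indicator_le_self' (fun _ _ => zero_le_one) ω)
    (fun ω k n hkn => by
      simp only [hS]
      exact Finset.sum_le_sum_of_subset_of_nonneg (Finset.range_subset_range.2 hkn)
        fun i _ _ => hind i ω)
    (fun ω => by simpa only [hS] using (hasSum_indicator_one_apply hd ω).tendsto_sum_nat)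
  refine (hasSum_iff_tendsto_nat_of_nonneg hpos _).2 ?_
  simpa only [S, hΛ.map_sum _ fun i _ => MemLinf.indicator_one (hf i)] using hlim

lemma map_simpleFunc_eq_zero (h : ∀ A, MeasurableSet[m] A → Λ (A.indicator 1) = 0)
    (φ : SimpleFunc Ω ℝ) : Λ φ = 0 := by
  induction φ using SimpleFunc.induction with
  | @const c A hA =>
    have hφ : ⇑(SimpleFunc.piecewise A hA (.const Ω c) (.const Ω 0)) = c • A.indicator 1 := by
      ext ω; by_cases hω : ω ∈ A <;> simp [hω]
    rw [hφ, hΛ.map_smul c _ (.indicator_one hA), h A hA, mul_zero]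
  | @add φ ψ _ hφ hψ =>
    rw [SimpleFunc.coe_add, hΛ.map_add _ _ φ.memLinf ψ.memLinf, hφ, hψ, add_zero]

lemma map_eq_zero_of_nonneg_of_le_one (h : ∀ A, MeasurableSet[m] A → Λ (A.indicator 1) = 0)
    {W : Ω → ℝ} (hW : Measurable[m] W) (hW0 : ∀ ω, 0 ≤ W ω) (hW1 : ∀ ω, W ω ≤ 1) : Λ W = 0 := by
  obtain ⟨φ, hφ1, hφmono, hφlim⟩ := exists_simpleFunc_monotone_tendsto hW hW0 hW1
  have hWmem : MemLinf m W := ⟨hW, 1, fun ω => abs_le.2 ⟨by linarith [hW0 ω], hW1 ω⟩⟩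
  have hlim := hΛ.tendsto (fun n => φ n) W (fun n => (φ n).memLinf) hWmem hφ1 hφmono hφlim
  simp only [hΛ.map_simpleFunc_eq_zero h] at hlim
  exact tendsto_nhds_unique hlim tendsto_const_nhds

lemma map_eq_zero_of_indicator (h : ∀ A, MeasurableSet[m] A → Λ (A.indicator 1) = 0)
    {X : Ω → ℝ} (hX : MemLinf m X) : Λ X = 0 := by
  obtain ⟨hXm, C, hC⟩ := hX
  set D := |C| + 1
  have hD : 0 < D := by positivity
  have hunit : ∀ Y : Ω → ℝ, Measurable[m] Y → (∀ ω, 0 ≤ Y ω) → (∀ ω, Y ω ≤ |X ω|) →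
      MemLinf m (fun ω => Y ω / D) ∧ Λ (fun ω => Y ω / D) = 0 := by
    intro Y hY hY0 hYX
    have hY0' : ∀ ω, 0 ≤ Y ω / D := fun ω => div_nonneg (hY0 ω) hD.le
    have hY1 : ∀ ω, Y ω / D ≤ 1 := fun ω =>
      (div_le_one hD).2 ((hYX ω).trans ((hC ω).trans ((le_abs_self C).trans (by linarith))))
    exact ⟨⟨hY.div_const D, 1, fun ω => abs_le.2 ⟨by linarith [hY0' ω], hY1 ω⟩⟩,
      hΛ.map_eq_zero_of_nonneg_of_le_one h (hY.div_const D) hY0' hY1⟩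
  obtain ⟨hPmem, hP⟩ := hunit (fun ω => max (X ω) 0) (hXm.max measurable_const)
    (fun ω => le_max_right _ _) (fun ω => max_le (le_abs_self _) (abs_nonneg _))
  obtain ⟨hNmem, hN⟩ := hunit (fun ω => max (-X ω) 0) (hXm.neg.max measurable_const)
    (fun ω => le_max_right _ _) (fun ω => max_le (neg_le_abs _) (abs_nonneg _))
  have hsplit : X = D • (fun ω => max (X ω) 0 / D) + (-D) • (fun ω => max (-X ω) 0 / D) := by
    ext ω
    simp only [Pi.add_apply, Pi.smul_apply, smul_eq_mul]
    field_simp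
    rcases le_total (X ω) 0 with hX0 | hX0 <;> simp [hX0]
  rw [hsplit, hΛ.map_add _ _ (hPmem.const_smul D) (hNmem.const_smul (-D)), hΛ.map_smul D _ hPmem,
    hΛ.map_smul (-D) _ hNmem, hP, hN]
  ring

end IsSigmaContinuousLinear

variable {m F : MeasurableSpace Ω} {μ : Measure Ω}

lemma isSigmaContinuousLinear_integral_mul (hm : m ≤ F) {z : Ω → ℝ} (hz : Integrable z μ) :
    IsSigmaContinuousLinear m (fun X => ∫ ω, z ω * X ω ∂μ) where
  map_add X Y hX hY := by
    simp only [Pi.add_apply, mul_add]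
    exact integral_add (hX.integrable_mul hm hz) (hY.integrable_mul hm hz)
  map_smul c X hX := by
    simp only [Pi.smul_apply, smul_eq_mul, mul_left_comm _ c]
    exact integral_const_mul c _
  tendsto X Y hX _ h1 _ hlim := by
    refine tendsto_integral_of_dominated_convergence (fun ω => |z ω|)
      (fun n => ((hX n).integrable_mul hm hz).aestronglyMeasurable) hz.abs
      (fun n => ae_of_all _ fun ω => ?_) (ae_of_all _ fun ω => (hlim ω).const_mul (z ω))
    rw [Real.norm_eq_abs, abs_mul]
    exact mul_le_of_le_one_right (abs_nonneg _) (h1 n ω)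

lemma integral_mul_indicator_one (z : Ω → ℝ) {A : Set Ω} (hA : MeasurableSet A) :
    ∫ ω, z ω * A.indicator 1 ω ∂μ = ∫ ω in A, z ω ∂μ := by
  rw [← integral_indicator hA]
  congr with ω
  by_cases hω : ω ∈ A <;> simp [hω]

lemma integral_mul_indicator_one_mul (z V : Ω → ℝ) {A : Set Ω} (hA : MeasurableSet A) :
    ∫ ω, z ω * (A.indicator 1 * V : Ω → ℝ) ω ∂μ = ∫ ω in A, z ω * V ω ∂μ := by
  rw [← integral_indicator hA]
  congr with ω
  by_cases hω : ω ∈ A <;> simp [hω]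

theorem IsSigmaContinuousLinear.exists_density [IsFiniteMeasure μ] (hm : m ≤ F)
    {Λ : (Ω → ℝ) → ℝ} (hΛ : IsSigmaContinuousLinear m Λ)
    (hpos : ∀ A, MeasurableSet[m] A → 0 ≤ Λ (A.indicator 1))
    (hnull : ∀ A, MeasurableSet[m] A → μ A = 0 → Λ (A.indicator 1) = 0) :
    ∃ z : Ω → ℝ, Measurable[m] z ∧ (∀ ω, 0 ≤ z ω) ∧ Integrable z μ ∧
      ∀ X, MemLinf m X → Λ X = ∫ ω, z ω * X ω ∂μ := by
  let ν : @Measure Ω m := @Measure.ofMeasurable Ω m (fun A _ => ENNReal.ofReal (Λ (A.indicator 1)))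
    (by rw [Set.indicator_empty', hΛ.map_zero, ENNReal.ofReal_zero])
    (fun f hf hd => by
      have h := hΛ.hasSum_map_indicator_one hf hd fun i => hpos _ (hf i)
      rw [← ENNReal.ofReal_tsum_of_nonneg (fun i => hpos _ (hf i)) h.summable, h.tsum_eq])
  have hν : ∀ A, MeasurableSet[m] A → ν A = ENNReal.ofReal (Λ (A.indicator 1)) := fun A hA =>
    @Measure.ofMeasurable_apply Ω m _ _ _ A hA
  have : @IsFiniteMeasure Ω m ν := ⟨by rw [hν _ .univ]; exact ENNReal.ofReal_lt_top⟩
  have hνμ : ν ≪ μ.trim hm := Measure.AbsolutelyContinuous.mk fun A hA hA0 => by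
    rw [hν A hA, hnull A hA (by rwa [trim_measurableSet_eq hm hA] at hA0), ENNReal.ofReal_zero]
  set z : Ω → ℝ := fun ω => (ν.rnDeriv (μ.trim hm) ω).toReal
  have hzm : Measurable[m] z := (Measure.measurable_rnDeriv _ _).ennreal_toReal
  have hzind : ∀ A, MeasurableSet[m] A → Λ (A.indicator 1) = ∫ ω, z ω * A.indicator 1 ω ∂μ := by
    intro A hA
    rw [integral_mul_indicator_one z (hm _ hA), setIntegral_trim hm hzm.stronglyMeasurable hA,
      Measure.setIntegral_toReal_rnDeriv hνμ, measureReal_def, hν A hA,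
      ENNReal.toReal_ofReal (hpos A hA)]
  have hz : Integrable z μ := integrable_of_integrable_trim hm
    (integrableOn_univ.1 (Measure.integrableOn_toReal_rnDeriv (measure_ne_top ν _)))
  refine ⟨z, hzm, fun ω => ENNReal.toReal_nonneg, hz, fun X hX => sub_eq_zero.1 ?_⟩
  exact (hΛ.sub (isSigmaContinuousLinear_integral_mul hm hz)).map_eq_zero_of_indicator
    (fun A hA => sub_eq_zero.2 (hzind A hA)) hX

lemma ae_pos_of_integral_mul_indicator_one (hm : m ≤ F) {z : Ω → ℝ} (hz : Measurable[m] z)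
    (hz0 : ∀ ω, 0 ≤ z ω)
    (h : ∀ A, MeasurableSet[m] A → ∫ ω, z ω * A.indicator 1 ω ∂μ = 0 → μ A = 0) :
    ∀ᵐ ω ∂μ, 0 < z ω := by
  have hA : MeasurableSet[m] {ω | z ω ≤ 0} := measurableSet_le hz measurable_const
  have hzero : ∫ ω, z ω * {ω | z ω ≤ 0}.indicator 1 ω ∂μ = 0 := by
    rw [integral_mul_indicator_one z (hm _ hA)]
    exact setIntegral_eq_zero_of_forall_eq_zero fun ω hω => le_antisymm hω (hz0 ω)
  filter_upwards [measure_eq_zero_iff_ae_notMem.1 (h _ hA hzero)] with ω hω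
  exact lt_of_not_ge hω

structure IsValuation (μ : Measure Ω) (m m₀ : MeasurableSpace Ω) (P : (Ω → ℝ) → Ω → ℝ) :
    Prop where
  memLinf : ∀ Y, MemLinf m Y → MemLinf m₀ (P Y)
  congr_ae : ∀ Y Y', MemLinf m Y → MemLinf m Y' → Y =ᵐ[μ] Y' → P Y =ᵐ[μ] P Y'
  map_add : ∀ Y Y', MemLinf m Y → MemLinf m Y' → P (Y + Y') =ᵐ[μ] P Y + P Y'
  map_smul : ∀ (c : ℝ) (Y : Ω → ℝ), MemLinf m Y → P (c • Y) =ᵐ[μ] c • P Y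
  nonneg : ∀ Y, MemLinf m Y → (0 ≤ᵐ[μ] Y) → 0 ≤ᵐ[μ] P Y
  tendsto : ∀ (Y : ℕ → Ω → ℝ) (Ylim : Ω → ℝ),
    (∀ n, MemLinf m (Y n)) → MemLinf m Ylim →
    (∀ᵐ ω ∂μ, (∀ n, |Y n ω| ≤ 1) ∧ Monotone (fun n => Y n ω) ∧
      Tendsto (fun n => Y n ω) atTop (nhds (Ylim ω))) →
    ∀ᵐ ω ∂μ, Monotone (fun n => P (Y n) ω) ∧
      Tendsto (fun n => P (Y n) ω) atTop (nhds (P Ylim ω))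

namespace IsValuation

variable [IsFiniteMeasure μ] {m₀ : MeasurableSpace Ω} {P : (Ω → ℝ) → Ω → ℝ}

lemma isSigmaContinuousLinear_integral (hm₀ : m₀ ≤ F) (hP : IsValuation μ m m₀ P) :
    IsSigmaContinuousLinear m (fun Y => ∫ ω, P Y ω ∂μ) where
  map_add Y Y' hY hY' := by
    rw [integral_congr_ae (hP.map_add Y Y' hY hY'), Pi.add_def,
      integral_add ((hP.memLinf Y hY).integrable hm₀) ((hP.memLinf Y' hY').integrable hm₀)]
  map_smul c Y hY := by
    rw [integral_congr_ae (hP.map_smul c Y hY), Pi.smul_def]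
    exact integral_const_mul c _
  tendsto Y Ylim hY hYlim h1 hmono hlim := by
    have h := hP.tendsto Y Ylim hY hYlim (ae_of_all _ fun ω => ⟨(h1 · ω), hmono ω, hlim ω⟩)
    exact integral_tendsto_of_tendsto_of_monotone (fun n => (hP.memLinf _ (hY n)).integrable hm₀)
      ((hP.memLinf _ hYlim).integrable hm₀) (h.mono fun _ => And.left) (h.mono fun _ => And.right)

theorem exists_pos_density (hm : m ≤ F) (hm₀ : m₀ ≤ F) (hP : IsValuation μ m m₀ P)
    (hna : ∀ Y, MemLinf m Y → 0 ≤ᵐ[μ] Y → P Y =ᵐ[μ] 0 → Y =ᵐ[μ] 0) :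
    ∃ z : Ω → ℝ, Integrable z μ ∧ Measurable[m] z ∧ (∀ᵐ ω ∂μ, 0 < z ω) ∧
      ∀ Y, MemLinf m Y → ∫ ω, P Y ω ∂μ = ∫ ω, z ω * Y ω ∂μ := by
  have hΛ := hP.isSigmaContinuousLinear_integral hm₀
  have hind0 : ∀ A : Set Ω, 0 ≤ᵐ[μ] A.indicator (1 : Ω → ℝ) := fun A =>
    ae_of_all _ (Set.indicator_nonneg fun _ _ => zero_le_one)
  have hPind0 : ∀ A : Set Ω, MeasurableSet[m] A → 0 ≤ᵐ[μ] P (A.indicator 1) := fun A hA =>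
    hP.nonneg _ (.indicator_one hA) (hind0 A)
  obtain ⟨z, hzm, hz0, hz, hzP⟩ := hΛ.exists_density hm
    (fun A hA => integral_nonneg_of_ae (hPind0 A hA))
    (fun A hA hA0 => by
      have h0 : A.indicator 1 =ᵐ[μ] (0 : Ω → ℝ) := by
        filter_upwards [measure_eq_zero_iff_ae_notMem.1 hA0] with ω hω
        exact Set.indicator_of_notMem hω _
      rw [integral_congr_ae (hP.congr_ae _ _ (.indicator_one hA) .zero h0)]
      exact hΛ.map_zero)
  refine ⟨z, hz, hzm, ae_pos_of_integral_mul_indicator_one hm hzm hz0 fun A hA hzA => ?_, hzP⟩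
  rw [← hzP _ (.indicator_one hA), integral_eq_zero_iff_of_nonneg_ae (hPind0 A hA)
    ((hP.memLinf _ (.indicator_one hA)).integrable hm₀)] at hzA
  simpa using Set.indicator_ae_eq_zero.1 (hna _ (.indicator_one hA) (hind0 A) hzA)

end IsValuation

lemma ae_eq_condExp_of_integral_mul_indicator_one_mul_eq [IsFiniteMeasure μ] (hm : m ≤ F)
    {m' : MeasurableSpace Ω} (hm' : m' ≤ F) {z z' V Y : Ω → ℝ} (hz : Integrable z μ)
    (hzm : Measurable[m] z) (hz' : Integrable z' μ) (hV : MemLinf m V) (hY : MemLinf m' Y)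
    (h : ∀ A, MeasurableSet[m] A →
      ∫ ω, z ω * (A.indicator 1 * V : Ω → ℝ) ω ∂μ = ∫ ω, z' ω * (A.indicator 1 * Y : Ω → ℝ) ω ∂μ) :
    (fun ω => z ω * V ω) =ᵐ[μ] μ[fun ω => z' ω * Y ω | m] := by
  refine ae_eq_condExp_of_forall_setIntegral_eq hm (hY.integrable_mul hm' hz')
    (fun A _ _ => (hV.integrable_mul hm hz).integrableOn) (fun A hA _ => ?_)
    (hzm.mul hV.1).aestronglyMeasurable
  rw [← integral_mul_indicator_one_mul z V (hm _ hA), h A hA,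
    integral_mul_indicator_one_mul z' Y (hm _ hA)]

end

theorem stmt_0_general {Ω : Type*} {F : MeasurableSpace Ω} (μ : Measure Ω) [IsProbabilityMeasure μ]
    (T : ℝ)
    (𝔽 : ℝ → MeasurableSpace Ω)
    (h𝔽mono : ∀ s t : ℝ, 0 ≤ s → s ≤ t → t ≤ T → 𝔽 s ≤ 𝔽 t)
    (h𝔽le : ∀ t : ℝ, 0 ≤ t → t ≤ T → 𝔽 t ≤ F)
    (π : ℝ → ℝ → (Ω → ℝ) → (Ω → ℝ))
    -- π_{st} maps L^∞(𝔽_t) into L^∞(𝔽_s) and is well defined on a.e.-equivalence classes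
    (hmem : ∀ s t : ℝ, 0 ≤ s → s ≤ t → t ≤ T →
      ∀ Y, MemLinf (𝔽 t) Y → MemLinf (𝔽 s) (π s t Y))
    (hwd : ∀ s t : ℝ, 0 ≤ s → s ≤ t → t ≤ T →
      ∀ Y Y', MemLinf (𝔽 t) Y → MemLinf (𝔽 t) Y' → Y =ᵐ[μ] Y' → π s t Y =ᵐ[μ] π s t Y')
    -- (A1) linearity
    (hadd : ∀ s t : ℝ, 0 ≤ s → s ≤ t → t ≤ T →
      ∀ Y Y', MemLinf (𝔽 t) Y → MemLinf (𝔽 t) Y' →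
        π s t (Y + Y') =ᵐ[μ] π s t Y + π s t Y')
    (hsmul : ∀ s t : ℝ, 0 ≤ s → s ≤ t → t ≤ T →
      ∀ (c : ℝ) (Y : Ω → ℝ), MemLinf (𝔽 t) Y → π s t (c • Y) =ᵐ[μ] c • π s t Y)
    -- (A1) positivity
    (hpos : ∀ s t : ℝ, 0 ≤ s → s ≤ t → t ≤ T →
      ∀ Y, MemLinf (𝔽 t) Y → (0 ≤ᵐ[μ] Y) → 0 ≤ᵐ[μ] π s t Y)
    -- (A2) no arbitrage
    (hna : ∀ t : ℝ, 0 ≤ t → t ≤ T →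
      ∀ Y, MemLinf (𝔽 t) Y → (0 ≤ᵐ[μ] Y) → (π 0 t Y =ᵐ[μ] 0 ↔ Y =ᵐ[μ] 0))
    -- (A3) dynamic consistency
    (hdc : ∀ s t u : ℝ, 0 ≤ s → s ≤ t → t ≤ u → u ≤ T →
      ∀ (Y X : Ω → ℝ), MemLinf (𝔽 u) Y → MemLinf (𝔽 t) X →
        π s u (X * Y) =ᵐ[μ] π s t (X * π t u Y))
    -- (A4) continuity under bounded monotone convergence
    (hcont : ∀ s t : ℝ, 0 ≤ s → s ≤ t → t ≤ T →
      ∀ (Y : ℕ → Ω → ℝ) (Ylim : Ω → ℝ),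
        (∀ n, MemLinf (𝔽 t) (Y n)) → MemLinf (𝔽 t) Ylim →
        (∀ᵐ ω ∂μ, (∀ n, |Y n ω| ≤ 1) ∧ Monotone (fun n => Y n ω) ∧
          Tendsto (fun n => Y n ω) atTop (nhds (Ylim ω))) →
        ∀ᵐ ω ∂μ, Monotone (fun n => π s t (Y n) ω) ∧
          Tendsto (fun n => π s t (Y n) ω) atTop (nhds (π s t Ylim ω))) :
    ∃ ζ : ℝ → Ω → ℝ,
      (∀ t : ℝ, 0 ≤ t → t ≤ T →
        Integrable (ζ t) μ ∧ Measurable[𝔽 t] (ζ t) ∧ (∀ᵐ ω ∂μ, 0 < ζ t ω)) ∧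
      ∀ s t : ℝ, 0 ≤ s → s ≤ t → t ≤ T → ∀ Y, MemLinf (𝔽 t) Y →
        (fun ω => ζ s ω * π s t Y ω) =ᵐ[μ] μ[fun ω => ζ t ω * Y ω | 𝔽 s] := by
  have hdensity : ∀ t, 0 ≤ t → t ≤ T → ∃ z : Ω → ℝ,
      Integrable z μ ∧ Measurable[𝔽 t] z ∧ (∀ᵐ ω ∂μ, 0 < z ω) ∧
        ∀ Y, MemLinf (𝔽 t) Y → ∫ ω, π 0 t Y ω ∂μ = ∫ ω, z ω * Y ω ∂μ := fun t ht0 htT =>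
    IsValuation.exists_pos_density (h𝔽le t ht0 htT)
      ((h𝔽mono 0 t le_rfl ht0 htT).trans (h𝔽le t ht0 htT))
      ⟨hmem 0 t le_rfl ht0 htT, hwd 0 t le_rfl ht0 htT, hadd 0 t le_rfl ht0 htT,
        hsmul 0 t le_rfl ht0 htT, hpos 0 t le_rfl ht0 htT, hcont 0 t le_rfl ht0 htT⟩
      fun Y hY hY0 => (hna t ht0 htT Y hY hY0).1
  choose z hz using hdensity
  refine ⟨fun t => if h : 0 ≤ t ∧ t ≤ T then z t h.1 h.2 else 0, fun t ht0 htT => ?_,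
    fun s t hs0 hst htT Y hY => ?_⟩
  · obtain ⟨hzt, hztm, hzt0, -⟩ := hz t ht0 htT
    simpa [ht0, htT] using ⟨hzt, hztm, hzt0⟩
  have ht0 := hs0.trans hst
  simp only [hs0, hst.trans htT, ht0, htT, and_self, dite_true]
  obtain ⟨hzs, hzsm, -, hzsπ⟩ := hz s hs0 (hst.trans htT)
  obtain ⟨hzt, -, -, hztπ⟩ := hz t ht0 htT
  refine ae_eq_condExp_of_integral_mul_indicator_one_mul_eq (h𝔽le s hs0 (hst.trans htT))
    (h𝔽le t ht0 htT) hzs hzsm hzt (hmem s t hs0 hst htT Y hY) hY fun A hA => ?_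
  have hAs : MemLinf (𝔽 s) (A.indicator 1) := .indicator_one hA
  rw [← hzsπ _ (hAs.mul (hmem s t hs0 hst htT Y hY)),
    ← hztπ _ ((hAs.mono (h𝔽mono s t hs0 hst htT)).mul hY)]
  exact integral_congr_ae (hdc 0 s t le_rfl hs0 hst htT Y _ hY hAs).symm

/-- Theorem 1 of the paper: given a filtration `(𝔽_t)_{0 ≤ t ≤ T}` with `𝔽_0`
trivial, and valuation operators `π_{st} : L^∞(𝔽_t) → L^∞(𝔽_s)` that are (A1) bounded positive
linear operators, (A2) without arbitrage at time `0`, (A3) dynamically consistent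
(`π_{su}(XY) = π_{st}(X·π_{tu}(Y))`), and (A4) continuous under bounded monotone convergence,
there exists a strictly positive, adapted, integrable state-price density process `ζ` with
`ζ_s · π_{st}(Y) = E[ζ_t Y | 𝔽_s]` a.s. for all `0 ≤ s ≤ t ≤ T` and all `Y ∈ L^∞(𝔽_t)`. -/
theorem stmt_0 {Ω : Type*} {F : MeasurableSpace Ω} (μ : Measure Ω) [IsProbabilityMeasure μ]
    (T : ℝ) (hT : 0 ≤ T)
    (𝔽 : ℝ → MeasurableSpace Ω)
    (h𝔽mono : ∀ s t : ℝ, 0 ≤ s → s ≤ t → t ≤ T → 𝔽 s ≤ 𝔽 t)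
    (h𝔽le : ∀ t : ℝ, 0 ≤ t → t ≤ T → 𝔽 t ≤ F)
    (h𝔽0 : ∀ A : Set Ω, MeasurableSet[𝔽 0] A → μ A = 0 ∨ μ A = 1)
    (π : ℝ → ℝ → (Ω → ℝ) → (Ω → ℝ))
    -- π_{st} maps L^∞(𝔽_t) into L^∞(𝔽_s) and is well defined on a.e.-equivalence classes
    (hmem : ∀ s t : ℝ, 0 ≤ s → s ≤ t → t ≤ T →
      ∀ Y, MemLinf (𝔽 t) Y → MemLinf (𝔽 s) (π s t Y))
    (hwd : ∀ s t : ℝ, 0 ≤ s → s ≤ t → t ≤ T →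
      ∀ Y Y', MemLinf (𝔽 t) Y → MemLinf (𝔽 t) Y' → Y =ᵐ[μ] Y' → π s t Y =ᵐ[μ] π s t Y')
    -- (A1) linearity
    (hadd : ∀ s t : ℝ, 0 ≤ s → s ≤ t → t ≤ T →
      ∀ Y Y', MemLinf (𝔽 t) Y → MemLinf (𝔽 t) Y' →
        π s t (Y + Y') =ᵐ[μ] π s t Y + π s t Y')
    (hsmul : ∀ s t : ℝ, 0 ≤ s → s ≤ t → t ≤ T →
      ∀ (c : ℝ) (Y : Ω → ℝ), MemLinf (𝔽 t) Y → π s t (c • Y) =ᵐ[μ] c • π s t Y)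
    -- (A1) positivity
    (hpos : ∀ s t : ℝ, 0 ≤ s → s ≤ t → t ≤ T →
      ∀ Y, MemLinf (𝔽 t) Y → (0 ≤ᵐ[μ] Y) → 0 ≤ᵐ[μ] π s t Y)
    -- (A1) boundedness
    (hbdd : ∀ s t : ℝ, 0 ≤ s → s ≤ t → t ≤ T →
      ∃ C : ℝ, ∀ (Y : Ω → ℝ) (M : ℝ), MemLinf (𝔽 t) Y → (∀ᵐ ω ∂μ, |Y ω| ≤ M) →
        ∀ᵐ ω ∂μ, |π s t Y ω| ≤ C * M)
    -- (A2) no arbitrage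
    (hna : ∀ t : ℝ, 0 ≤ t → t ≤ T →
      ∀ Y, MemLinf (𝔽 t) Y → (0 ≤ᵐ[μ] Y) → (π 0 t Y =ᵐ[μ] 0 ↔ Y =ᵐ[μ] 0))
    -- (A3) dynamic consistency
    (hdc : ∀ s t u : ℝ, 0 ≤ s → s ≤ t → t ≤ u → u ≤ T →
      ∀ (Y X : Ω → ℝ), MemLinf (𝔽 u) Y → MemLinf (𝔽 t) X →
        π s u (X * Y) =ᵐ[μ] π s t (X * π t u Y))
    -- (A4) continuity under bounded monotone convergence
    (hcont : ∀ s t : ℝ, 0 ≤ s → s ≤ t → t ≤ T →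
      ∀ (Y : ℕ → Ω → ℝ) (Ylim : Ω → ℝ),
        (∀ n, MemLinf (𝔽 t) (Y n)) → MemLinf (𝔽 t) Ylim →
        (∀ᵐ ω ∂μ, (∀ n, |Y n ω| ≤ 1) ∧ Monotone (fun n => Y n ω) ∧
          Tendsto (fun n => Y n ω) atTop (nhds (Ylim ω))) →
        ∀ᵐ ω ∂μ, Monotone (fun n => π s t (Y n) ω) ∧
          Tendsto (fun n => π s t (Y n) ω) atTop (nhds (π s t Ylim ω))) :
    ∃ ζ : ℝ → Ω → ℝ,
      (∀ t : ℝ, 0 ≤ t → t ≤ T →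
        Integrable (ζ t) μ ∧ Measurable[𝔽 t] (ζ t) ∧ (∀ᵐ ω ∂μ, 0 < ζ t ω)) ∧
      ∀ s t : ℝ, 0 ≤ s → s ≤ t → t ≤ T → ∀ Y, MemLinf (𝔽 t) Y →
        (fun ω => ζ s ω * π s t Y ω) =ᵐ[μ] μ[fun ω => ζ t ω * Y ω | 𝔽 s] :=
  stmt_0_general μ T 𝔽 h𝔽mono h𝔽le π hmem hwd hadd hsmul hpos hna hdc hcont
end

section
/- Let n ≥ 1 and let π : ℝ^n → ℝ be concave, monotone and translation-invariant with π(0) = 0. Then the infimum over all λ ∈ ℝ^n of the concave dual π̃(λ) = sup_{K ∈ ℝ^n} (π(K) − λ·K) equals 0. -/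
/-!
A concave `π` with `π 0 = 0` lies below a linear functional `K ↦ λ · K`: Hahn–Banach extends
`0` from the zero subspace below the sublinear one-sided directional derivative at `0` of the
convex function `-π`. For this `λ` the dual `π̃ λ` is `≤ 0`, while every `π̃ λ'` is
`≥ π 0 - λ' · 0 = 0`.
-/

open Set

section

variable {E : Type*} [AddCommGroup E] [Module ℝ E] {f : E → ℝ}

/-- For convex `f` the quotient is monotone in `t`, so this infimum is the right derivative of
`t ↦ f (t • x)` at `0`. -/
noncomputable def rightDirDerivZero (f : E → ℝ) (x : E) : ℝ :=
  ⨅ t : Ioi (0 : ℝ), (f ((t : ℝ) • x) - f 0) / t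

theorem le_rightDirDerivZero {c : ℝ} {x : E} (h : ∀ t : ℝ, 0 < t → c ≤ (f (t • x) - f 0) / t) :
    c ≤ rightDirDerivZero f x :=
  le_ciInf fun t => h t t.2

namespace ConvexOn

theorem slope_smul_mono (hf : ConvexOn ℝ univ f) (x : E) {s t : ℝ} (hs : s ≠ 0) (ht : t ≠ 0)
    (hst : s ≤ t) : (f (s • x) - f 0) / s ≤ (f (t • x) - f 0) / t := by
  have hline : ConvexOn ℝ univ (f ∘ LinearMap.toSpanSingleton ℝ E x) :=
    hf.comp_linearMap (LinearMap.toSpanSingleton ℝ E x)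
  simpa using hline.secant_mono (a := 0) trivial trivial trivial hs ht hst

theorem bddBelow_slope_smul (hf : ConvexOn ℝ univ f) (x : E) :
    BddBelow (range fun t : Ioi (0 : ℝ) => (f ((t : ℝ) • x) - f 0) / t) :=
  ⟨_, forall_mem_range.2 fun t =>
    hf.slope_smul_mono x (by norm_num : (-1 : ℝ) ≠ 0) t.2.ne' (by linarith [t.2.out])⟩

theorem rightDirDerivZero_le (hf : ConvexOn ℝ univ f) (x : E) {t : ℝ} (ht : 0 < t) :
    rightDirDerivZero f x ≤ (f (t • x) - f 0) / t :=
  ciInf_le (hf.bddBelow_slope_smul x) ⟨t, ht⟩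

theorem rightDirDerivZero_smul_le (hf : ConvexOn ℝ univ f) {c : ℝ} (hc : 0 < c) (x : E) :
    rightDirDerivZero f (c • x) ≤ c * rightDirDerivZero f x := by
  rw [← div_le_iff₀' hc]
  refine le_rightDirDerivZero fun t ht => ?_
  have h := hf.rightDirDerivZero_le (c • x) (div_pos ht hc)
  rw [smul_smul, div_mul_cancel₀ t hc.ne'] at h
  rw [div_le_iff₀' hc]
  exact h.trans_eq (by field_simp)

theorem rightDirDerivZero_smul (hf : ConvexOn ℝ univ f) {c : ℝ} (hc : 0 < c) (x : E) :
    rightDirDerivZero f (c • x) = c * rightDirDerivZero f x := by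
  refine le_antisymm (hf.rightDirDerivZero_smul_le hc x) ?_
  have h := hf.rightDirDerivZero_smul_le (inv_pos.2 hc) (c • x)
  rwa [inv_smul_smul₀ hc.ne', le_inv_mul_iff₀ hc] at h

theorem slope_smul_add_le (hf : ConvexOn ℝ univ f) (x y : E) {t : ℝ} (ht : 0 < t) :
    (f ((t / 2) • (x + y)) - f 0) / (t / 2) ≤ (f (t • x) - f 0) / t + (f (t • y) - f 0) / t := by
  have hmid := hf.2 (mem_univ (t • x)) (mem_univ (t • y)) (by norm_num : (0 : ℝ) ≤ 1 / 2)
    (by norm_num : (0 : ℝ) ≤ 1 / 2) (by norm_num)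
  rw [smul_smul, smul_smul, ← smul_add, one_div_mul_eq_div, smul_eq_mul, smul_eq_mul] at hmid
  rw [← add_div, div_le_div_iff₀ (half_pos ht) ht]
  nlinarith

theorem rightDirDerivZero_add_le (hf : ConvexOn ℝ univ f) (x y : E) :
    rightDirDerivZero f (x + y) ≤ rightDirDerivZero f x + rightDirDerivZero f y := by
  have key : ∀ s u : ℝ, 0 < s → 0 < u →
      rightDirDerivZero f (x + y) ≤ (f (s • x) - f 0) / s + (f (u • y) - f 0) / u := by
    intro s u hs hu
    have ht : 0 < min s u := lt_min hs hu
    calc rightDirDerivZero f (x + y)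
        ≤ (f ((min s u / 2) • (x + y)) - f 0) / (min s u / 2) :=
          hf.rightDirDerivZero_le _ (half_pos ht)
      _ ≤ (f (min s u • x) - f 0) / min s u + (f (min s u • y) - f 0) / min s u :=
          hf.slope_smul_add_le x y ht
      _ ≤ (f (s • x) - f 0) / s + (f (u • y) - f 0) / u :=
          add_le_add (hf.slope_smul_mono x ht.ne' hs.ne' (min_le_left s u))
            (hf.slope_smul_mono y ht.ne' hu.ne' (min_le_right s u))
  rw [← sub_le_iff_le_add']
  refine le_rightDirDerivZero fun u hu => ?_
  rw [sub_le_iff_le_add, ← sub_le_iff_le_add']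
  exact le_rightDirDerivZero fun s hs => sub_le_iff_le_add.2 (key s u hs hu)

theorem exists_linearMap_add_le (hf : ConvexOn ℝ univ f) :
    ∃ g : E →ₗ[ℝ] ℝ, ∀ x, f 0 + g x ≤ f x := by
  obtain ⟨g, -, hg⟩ := exists_extension_of_le_sublinear (LinearMap.toPMap 0 ⊥)
    (rightDirDerivZero f) (fun c hc x => hf.rightDirDerivZero_smul hc x)
    hf.rightDirDerivZero_add_le fun ⟨x, hx⟩ => by
      obtain rfl : x = 0 := Submodule.mem_bot ℝ |>.1 hx
      simpa using le_rightDirDerivZero fun t ht => by simp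
  refine ⟨g, fun x => ?_⟩
  have h := (hg x).trans (hf.rightDirDerivZero_le x one_pos)
  rw [one_smul, div_one] at h
  linarith

end ConvexOn

theorem ConcaveOn.exists_le_add_linearMap (hf : ConcaveOn ℝ univ f) : ∃ g : E →ₗ[ℝ] ℝ, ∀ x, f x ≤ f 0 + g x := by
  obtain ⟨g, hg⟩ := hf.neg.exists_linearMap_add_le
  exact ⟨-g, fun x => by simpa [neg_add_le_iff_le_add, add_comm] using hg x⟩

end

theorem stmt_3_general (n : ℕ) (π : (Fin n → ℝ) → ℝ)
    (hconc : ConcaveOn ℝ Set.univ π)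
    (hzero : π 0 = 0) :
    (⨅ l : Fin n → ℝ, ⨆ K : Fin n → ℝ, ((π K - ∑ y, l y * K y : ℝ) : EReal)) = 0 := by
  obtain ⟨g, hg⟩ := hconc.exists_le_add_linearMap
  set l : Fin n → ℝ := fun y => g fun j => if y = j then 1 else 0
  have hgl (K : Fin n → ℝ) : g K = ∑ y, l y * K y := by
    simp only [g.pi_apply_eq_sum_univ K, smul_eq_mul, mul_comm, l]
  refine le_antisymm (iInf_le_of_le l (iSup_le fun K => ?_))
    (le_iInf fun l' => le_iSup_of_le 0 ?_)
  · have hK : π K - ∑ y, l y * K y ≤ 0 := by linarith [hg K, hgl K]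
    exact_mod_cast hK
  · simp [hzero]

/-- For a concave, monotone, translation-invariant `π : ℝ^n → ℝ` with `π(0) = 0`,
the infimum over all `λ` of the concave dual `π̃(λ) = sup_K (π(K) − λ·K)` equals `0`. -/
theorem stmt_3 (n : ℕ) (hn : 1 ≤ n) (π : (Fin n → ℝ) → ℝ)
    (hconc : ConcaveOn ℝ Set.univ π)
    (hmono : Monotone π)
    (hti : ∀ (K : Fin n → ℝ) (a : ℝ), π (fun y => K y + a) = π K + a)
    (hzero : π 0 = 0) :
    (⨅ l : Fin n → ℝ, ⨆ K : Fin n → ℝ, ((π K - ∑ y, l y * K y : ℝ) : EReal)) = 0 :=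
  stmt_3_general n π hconc hzero
end

section
/- Let n ≥ 1 and let π : ℝ^n → ℝ be concave, monotone and translation-invariant. Then for every K ∈ ℝ^n, π(K) = inf { λ·K + π̃(λ) : λ a probability vector }, and this infimum is attained at some probability vector λ (at which π̃(λ) is finite). -/
/-!
The strict hypograph of `π` is convex and open (a concave function on a finite-dimensional space
is continuous), so Hahn–Banach separates it from `(K, π K)`. The separating functional gives a
supergradient `λ` of `π` at `K`: the point `K` maximizes `π - λ·_`, so `π̃(λ) = π K - λ·K` is
finite and the infimum is attained at `λ`. Monotonicity of `π` makes `λ` nonnegative, and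
translation invariance forces `λ·𝟙 = 1`. For any other `λ'`, evaluating the supremum defining
`π̃(λ')` at `K` gives `π K ≤ λ'·K + π̃(λ')`.
-/

open Set

section Supergradient

variable {E : Type*} [AddCommGroup E] [TopologicalSpace E] [IsTopologicalAddGroup E]
  [Module ℝ E] [ContinuousSMul ℝ E]

theorem ConcaveOn.exists_forall_sub_clm_le {f : E → ℝ} (hf : ConcaveOn ℝ univ f)
    (hcont : Continuous f) (x : E) : ∃ φ : E →L[ℝ] ℝ, ∀ y, f y - φ y ≤ f x - φ x := by
  have hconv : Convex ℝ {p : E × ℝ | p.2 < f p.1} := by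
    simpa using hf.convex_strict_hypograph
  have hopen : IsOpen {p : E × ℝ | p.2 < f p.1} :=
    isOpen_lt continuous_snd (hcont.comp continuous_fst)
  obtain ⟨g, hg⟩ :=
    geometric_hahn_banach_open_point (x := (x, f x)) hconv hopen (lt_irrefl (f x) :)
  set c := g (0, 1)
  have hsplit : ∀ y t, g (y, t) = g (y, 0) + t * c := fun y t => by
    rw [show (y, t) = (y, 0) + t • ((0 : E), (1 : ℝ)) by simp, map_add, map_smul, smul_eq_mul]
  have hlt : ∀ y t, t < f y → g (y, 0) + t * c < g (x, 0) + f x * c := fun y t ht => by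
    rw [← hsplit, ← hsplit]; exact hg (y, t) ht
  have hc : 0 < c := by linarith [hlt x (f x - 1) (by linarith)]
  -- The strict separation of the open hypograph passes to its closure `t ≤ f y`.
  have hle : ∀ y, f y + g (y, 0) / c ≤ f x + g (x, 0) / c := fun y => by
    have : f y ≤ f x + (g (x, 0) - g (y, 0)) / c :=
      le_of_forall_lt fun t ht => by
        rw [← sub_lt_iff_lt_add', lt_div_iff₀ hc]; linarith [hlt y t ht]
    rw [sub_div] at this; linarith
  refine ⟨-(c⁻¹ • g.comp (ContinuousLinearMap.inl ℝ E ℝ)), fun y => ?_⟩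
  simpa [div_eq_inv_mul] using hle y

end Supergradient

theorem ContinuousLinearMap.apply_eq_sum_mul_single {ι : Type*} [Fintype ι] [DecidableEq ι]
    (φ : (ι → ℝ) →L[ℝ] ℝ) (x : ι → ℝ) : φ x = ∑ i, φ (Pi.single i 1) * x i := by
  conv_lhs => rw [← Finset.univ_sum_single x]
  refine (map_sum φ _ _).trans (Finset.sum_congr rfl fun i _ => ?_)
  rw [mul_comm, ← smul_eq_mul, ← map_smul, ← Pi.single_smul', smul_eq_mul, mul_one]

section

variable {E : Type*} [AddCommGroup E] [Module ℝ E] {f : E → ℝ} {φ : E →ₗ[ℝ] ℝ} {x : E}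

theorem Monotone.linearMap_nonneg_of_forall_sub_le [PartialOrder E] [IsOrderedAddMonoid E]
    (hf : Monotone f) (hφ : ∀ y, f y - φ y ≤ f x - φ x) {v : E} (hv : 0 ≤ v) : 0 ≤ φ v := by
  have := hφ (x + v)
  rw [map_add] at this
  linarith [hf (le_add_of_nonneg_right hv : x ≤ x + v)]

theorem linearMap_eq_one_of_forall_sub_le {u : E} (hφ : ∀ y, f y - φ y ≤ f x - φ x)
    (hu : ∀ a : ℝ, f (x + a • u) = f x + a) : φ u = 1 := by
  have key : ∀ a : ℝ, a * (1 - φ u) ≤ 0 := fun a => by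
    have := hφ (x + a • u)
    rw [hu, map_add, map_smul, smul_eq_mul] at this
    linarith
  linarith [key 1, key (-1)]

end

theorem exists_prob_forall_sub_dot_le {ι : Type*} [Fintype ι] {π : (ι → ℝ) → ℝ}
    (hconc : ConcaveOn ℝ univ π) (hmono : Monotone π)
    (hti : ∀ (K : ι → ℝ) (a : ℝ), π (fun y => K y + a) = π K + a) (K : ι → ℝ) :
    ∃ l : ι → ℝ, (∀ y, 0 ≤ l y) ∧ ∑ y, l y = 1 ∧
      ∀ K', π K' - ∑ y, l y * K' y ≤ π K - ∑ y, l y * K y := by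
  classical
  obtain ⟨φ, hφ⟩ := hconc.exists_forall_sub_clm_le
    (continuousOn_univ.mp (hconc.continuousOn isOpen_univ)) K
  refine ⟨fun y => φ (Pi.single y 1), fun y => ?_, ?_, ?_⟩
  · exact hmono.linearMap_nonneg_of_forall_sub_le hφ (Pi.single_nonneg.2 zero_le_one)
  · have := linearMap_eq_one_of_forall_sub_le (u := 1) hφ fun a => by
      convert hti K a using 2; ext; simp
    simpa [φ.apply_eq_sum_mul_single 1] using this
  · simpa [← φ.apply_eq_sum_mul_single] using hφ

section ConcaveDual

variable {ι : Type*} [Fintype ι]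

noncomputable def concaveDual (π : (ι → ℝ) → ℝ) (l : ι → ℝ) : EReal :=
  ⨆ K', ((π K' - ∑ y, l y * K' y : ℝ) : EReal)

theorem concaveDual_eq_of_forall_le {π : (ι → ℝ) → ℝ} {l K : ι → ℝ}
    (h : ∀ K', π K' - ∑ y, l y * K' y ≤ π K - ∑ y, l y * K y) :
    concaveDual π l = ((π K - ∑ y, l y * K y : ℝ) : EReal) :=
  le_antisymm (iSup_le fun K' => EReal.coe_le_coe_iff.2 (h K'))
    (le_iSup (fun K' => ((π K' - ∑ y, l y * K' y : ℝ) : EReal)) K)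

theorem coe_le_coe_add_concaveDual (π : (ι → ℝ) → ℝ) (l K : ι → ℝ) :
    ((π K : ℝ) : EReal) ≤ ((∑ y, l y * K y : ℝ) : EReal) + concaveDual π l := by
  calc ((π K : ℝ) : EReal)
      = ((∑ y, l y * K y : ℝ) : EReal) + ((π K - ∑ y, l y * K y : ℝ) : EReal) := by
        rw [← EReal.coe_add, add_sub_cancel]
    _ ≤ _ := add_le_add_right (le_iSup (fun K' => ((π K' - ∑ y, l y * K' y : ℝ) : EReal)) K) _

end ConcaveDual

theorem stmt_4_general (n : ℕ) (π : (Fin n → ℝ) → ℝ)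
    (hconc : ConcaveOn ℝ Set.univ π)
    (hmono : Monotone π)
    (hti : ∀ (K : Fin n → ℝ) (a : ℝ), π (fun y => K y + a) = π K + a)
    (K : Fin n → ℝ) :
    ∃ l : Fin n → ℝ, (∀ y, 0 ≤ l y) ∧ (∑ y, l y = 1) ∧
      (⨆ K' : Fin n → ℝ, ((π K' - ∑ y, l y * K' y : ℝ) : EReal)) ≠ ⊤ ∧
      ((π K : ℝ) : EReal)
        = ((∑ y, l y * K y : ℝ) : EReal)
          + (⨆ K' : Fin n → ℝ, ((π K' - ∑ y, l y * K' y : ℝ) : EReal)) ∧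
      ∀ l' : Fin n → ℝ, (∀ y, 0 ≤ l' y) → (∑ y, l' y = 1) →
        ((π K : ℝ) : EReal)
          ≤ ((∑ y, l' y * K y : ℝ) : EReal)
            + (⨆ K' : Fin n → ℝ, ((π K' - ∑ y, l' y * K' y : ℝ) : EReal)) := by
  obtain ⟨l, hl_nonneg, hl_sum, hmax⟩ := exists_prob_forall_sub_dot_le hconc hmono hti K
  have hdual := concaveDual_eq_of_forall_le hmax
  refine ⟨l, hl_nonneg, hl_sum, ?_, ?_, fun l' _ _ => coe_le_coe_add_concaveDual π l' K⟩
  · change concaveDual π l ≠ ⊤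
    exact hdual ▸ EReal.coe_ne_top _
  · change _ = _ + concaveDual π l
    rw [hdual, ← EReal.coe_add, add_sub_cancel]

/-- For a concave, monotone, translation-invariant `π : ℝ^n → ℝ` and any `K`,
`π(K) = inf { λ·K + π̃(λ) : λ a probability vector }` and the infimum is attained at some
probability vector `λ` at which the concave dual `π̃(λ)` is finite. -/
theorem stmt_4 (n : ℕ) (hn : 1 ≤ n) (π : (Fin n → ℝ) → ℝ)
    (hconc : ConcaveOn ℝ Set.univ π)
    (hmono : Monotone π)
    (hti : ∀ (K : Fin n → ℝ) (a : ℝ), π (fun y => K y + a) = π K + a)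
    (K : Fin n → ℝ) :
    ∃ l : Fin n → ℝ, (∀ y, 0 ≤ l y) ∧ (∑ y, l y = 1) ∧
      (⨆ K' : Fin n → ℝ, ((π K' - ∑ y, l y * K' y : ℝ) : EReal)) ≠ ⊤ ∧
      ((π K : ℝ) : EReal)
        = ((∑ y, l y * K y : ℝ) : EReal)
          + (⨆ K' : Fin n → ℝ, ((π K' - ∑ y, l y * K' y : ℝ) : EReal)) ∧
      ∀ l' : Fin n → ℝ, (∀ y, 0 ≤ l' y) → (∑ y, l' y = 1) →
        ((π K : ℝ) : EReal)
          ≤ ((∑ y, l' y * K y : ℝ) : EReal)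
            + (⨆ K' : Fin n → ℝ, ((π K' - ∑ y, l' y * K' y : ℝ) : EReal)) :=
  stmt_4_general n π hconc hmono hti K
end

section
/- Let Z be a nonempty finite set and for each z ∈ Z let S_z be a nonempty finite set. Let f : ℝ × ℝ^Z → ℝ be concave, monotone and translation-invariant (f(a+c, v+c·𝟙) = f(a,v)+c for all c ∈ ℝ), and for each z ∈ Z let g_z : ℝ × ℝ^{S_z} → ℝ be concave, monotone and translation-invariant (g_z(b+c, w+c·𝟙) = g_z(b,w)+c). Define π on ℝ × Π_{z∈Z}(ℝ × ℝ^{S_z}) by π(k_0, (k_z, k_{z,·})_z) = f(k_0, (g_z(k_z, k_{z,·}))_z). Let λ consist of nonnegative components λ_0, (λ_z)_{z∈Z}, (λ_{z,y})_{z∈Z, y∈S_z} with λ_0 + Σ_z (λ_z + Σ_y λ_{z,y}) = 1, and set λ̄_z = λ_z + Σ_{y∈S_z} λ_{z,y}; assume λ̄_z > 0 for every z ∈ Z. Then the concave dual of π satisfies π̃(λ) = f̃(λ_0, (λ̄_z)_z) + Σ_{z∈Z} λ̄_z · g̃_z(λ_z/λ̄_z, (λ_{z,y}/λ̄_z)_y),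 as an identity in ℝ ∪ {+∞}, where f̃ and g̃_z denote the concave duals of f and g_z. -/
open scoped BigOperators

private lemma ereal_iSup_add_real {ι : Sort*} (w : ι → EReal) (c : ℝ) :
    (⨆ i, w i) + (c : EReal) = ⨆ i, (w i + (c : EReal)) := by
  refine le_antisymm ?_ (iSup_le fun i => add_le_add (le_iSup w i) le_rfl)
  have h1 : (⨆ i, w i) ≤ (⨆ i, (w i + (c : EReal))) + ((-c : ℝ) : EReal) := by
    refine iSup_le fun i => ?_
    have hw : w i = (w i + (c : EReal)) + ((-c : ℝ) : EReal) := by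
      rw [add_assoc, ← EReal.coe_add]; simp
    rw [hw]
    exact add_le_add (le_iSup (fun i => w i + (c : EReal)) i) le_rfl
  calc (⨆ i, w i) + (c : EReal)
      ≤ ((⨆ i, (w i + (c : EReal))) + ((-c : ℝ) : EReal)) + (c : EReal) :=
        add_le_add h1 le_rfl
    _ = ⨆ i, (w i + (c : EReal)) := by rw [add_assoc, ← EReal.coe_add]; simp

private lemma ereal_add_iSup_real {ι : Sort*} [Nonempty ι] (X : EReal) (v : ι → ℝ) :
    X + (⨆ j, ((v j : ℝ) : EReal)) = ⨆ j, (X + ((v j : ℝ) : EReal)) := by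
  induction X with
  | bot => simp
  | coe x =>
      rw [add_comm, ereal_iSup_add_real (fun j => ((v j : ℝ) : EReal)) x]
      exact iSup_congr fun j => add_comm _ _
  | top =>
      have hne : (⨆ j, ((v j : ℝ) : EReal)) ≠ ⊥ := by
        obtain ⟨j⟩ := ‹Nonempty ι›
        exact ne_bot_of_le_ne_bot (EReal.coe_ne_bot (v j)) (le_iSup (fun j => ((v j : ℝ) : EReal)) j)
      rw [EReal.top_add_of_ne_bot hne]
      have : ∀ j, (⊤ : EReal) + ((v j : ℝ) : EReal) = ⊤ := fun j =>
        EReal.top_add_of_ne_bot (EReal.coe_ne_bot _)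
      simp [this]

private lemma ereal_sup_add_sup {ι κ : Type*} [Nonempty ι] [Nonempty κ]
    (u : ι → ℝ) (v : κ → ℝ) :
    (⨆ i, ((u i : ℝ) : EReal)) + (⨆ j, ((v j : ℝ) : EReal))
      = ⨆ p : ι × κ, ((u p.1 + v p.2 : ℝ) : EReal) := by
  rw [iSup_prod]
  calc (⨆ i, ((u i : ℝ) : EReal)) + (⨆ j, ((v j : ℝ) : EReal))
      = ⨆ i, (((u i : ℝ) : EReal) + ⨆ j, ((v j : ℝ) : EReal)) := by
        rw [add_comm, ereal_add_iSup_real]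
        exact iSup_congr fun i => add_comm _ _
    _ = ⨆ i, ⨆ j, ((u i + v j : ℝ) : EReal) := by
        refine iSup_congr fun i => ?_
        rw [ereal_add_iSup_real]
        exact iSup_congr fun j => (EReal.coe_add _ _).symm

private lemma ereal_mul_iSup {ι : Sort*} {c : ℝ} (hc : 0 < c) (v : ι → ℝ) :
    (c : EReal) * (⨆ j, ((v j : ℝ) : EReal)) = ⨆ j, ((c * v j : ℝ) : EReal) := by
  have hc' : (0 : EReal) ≤ (c : EReal) := by exact_mod_cast hc.le
  have hcinv : (0 : EReal) ≤ ((c⁻¹ : ℝ) : EReal) := by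
    exact_mod_cast (inv_nonneg.mpr hc.le)
  refine le_antisymm ?_ (iSup_le fun j => ?_)
  · have h1 : (⨆ j, ((v j : ℝ) : EReal)) ≤ ((c⁻¹ : ℝ) : EReal) * ⨆ j, ((c * v j : ℝ) : EReal) := by
      refine iSup_le fun j => ?_
      have hv : ((v j : ℝ) : EReal) = ((c⁻¹ : ℝ) : EReal) * ((c * v j : ℝ) : EReal) := by
        rw [← EReal.coe_mul]; congr 1; field_simp
      rw [hv]
      exact mul_le_mul_of_nonneg_left (le_iSup (fun j => ((c * v j : ℝ) : EReal)) j) hcinv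
    calc (c : EReal) * (⨆ j, ((v j : ℝ) : EReal))
        ≤ (c : EReal) * (((c⁻¹ : ℝ) : EReal) * ⨆ j, ((c * v j : ℝ) : EReal)) :=
          mul_le_mul_of_nonneg_left h1 hc'
      _ = ⨆ j, ((c * v j : ℝ) : EReal) := by
          rw [← mul_assoc, ← EReal.coe_mul, mul_inv_cancel₀ hc.ne', EReal.coe_one, one_mul]
  · rw [EReal.coe_mul]
    exact mul_le_mul_of_nonneg_left (le_iSup (fun j => ((v j : ℝ) : EReal)) j) hc'

private lemma ereal_sum_iSup {Z : Type*} {Q : Z → Type*} [∀ z, Nonempty (Q z)]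
    (s : Finset Z) (h : ∀ z, Q z → ℝ) :
    ∑ z ∈ s, (⨆ q : Q z, ((h z q : ℝ) : EReal)) =
      ⨆ q : ∀ z, Q z, ((∑ z ∈ s, h z (q z) : ℝ) : EReal) := by
  classical
  induction s using Finset.induction_on with
  | empty => simp
  | @insert a s ha ih =>
      rw [Finset.sum_insert ha, ih, ereal_sup_add_sup]
      refine le_antisymm (iSup_le fun p => ?_) (iSup_le fun q => ?_)
      · refine le_iSup_of_le (Function.update p.2 a p.1) ?_
        apply EReal.coe_le_coe_iff.2
        rw [Finset.sum_insert ha, Function.update_self]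
        have : ∑ z ∈ s, h z (Function.update p.2 a p.1 z) = ∑ z ∈ s, h z (p.2 z) :=
          Finset.sum_congr rfl fun z hz => by
            rw [Function.update_of_ne (by rintro rfl; exact ha hz)]
        rw [this]
      · refine le_iSup_of_le (q a, q) ?_
        apply EReal.coe_le_coe_iff.2
        rw [Finset.sum_insert ha]


/-- two-period dual recursion.  With `π(k₀,(k_z,k_{z,·})_z) = f(k₀,(g_z(k_z,k_{z,·}))_z)`
and `λ` a probability on the whole (two-period) tree with `λ̄_z > 0` for all `z`, the concave dual
satisfies `π̃(λ) = f̃(λ₀,(λ̄_z)_z) + Σ_z λ̄_z · g̃_z(λ_z/λ̄_z, (λ_{z,y}/λ̄_z)_y)` in `ℝ ∪ {+∞}`. -/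
theorem stmt_6 (Z : Type*) [Fintype Z] [Nonempty Z]
    (S : Z → Type*) [∀ z, Fintype (S z)] [∀ z, Nonempty (S z)]
    (f : ℝ × (Z → ℝ) → ℝ)
    (hfconc : ConcaveOn ℝ Set.univ f)
    (hfmono : Monotone f)
    (hfti : ∀ (a : ℝ) (v : Z → ℝ) (c : ℝ), f (a + c, fun z => v z + c) = f (a, v) + c)
    (g : ∀ z : Z, ℝ × (S z → ℝ) → ℝ)
    (hgconc : ∀ z, ConcaveOn ℝ Set.univ (g z))
    (hgmono : ∀ z, Monotone (g z))
    (hgti : ∀ z (b : ℝ) (w : S z → ℝ) (c : ℝ), g z (b + c, fun y => w y + c) = g z (b, w) + c)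
    (l0 : ℝ) (lZ : Z → ℝ) (lS : ∀ z : Z, S z → ℝ)
    (hl0 : 0 ≤ l0) (hlZ : ∀ z, 0 ≤ lZ z) (hlS : ∀ z y, 0 ≤ lS z y)
    (hsum : l0 + ∑ z, (lZ z + ∑ y, lS z y) = 1)
    (lbar : Z → ℝ) (hlbar : ∀ z, lbar z = lZ z + ∑ y, lS z y)
    (hlbarpos : ∀ z, 0 < lbar z) :
    (⨆ K : ℝ × (∀ z : Z, ℝ × (S z → ℝ)),
        ((f (K.1, fun z => g z (K.2 z))
            - (l0 * K.1 + ∑ z, (lZ z * (K.2 z).1 + ∑ y, lS z y * (K.2 z).2 y)) : ℝ) : EReal))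
      = (⨆ p : ℝ × (Z → ℝ), ((f p - (l0 * p.1 + ∑ z, lbar z * p.2 z) : ℝ) : EReal))
        + ∑ z : Z, ((lbar z : ℝ) : EReal)
            * (⨆ q : ℝ × (S z → ℝ),
                ((g z q - ((lZ z / lbar z) * q.1 + ∑ y, (lS z y / lbar z) * q.2 y) : ℝ) : EReal)) := by
  classical
  -- real-valued building blocks
  have hmul : ∀ z (q : ℝ × (S z → ℝ)),
      lbar z * (g z q - ((lZ z / lbar z) * q.1 + ∑ y, (lS z y / lbar z) * q.2 y))
        = lbar z * g z q - (lZ z * q.1 + ∑ y, lS z y * q.2 y) := by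
    intro z q
    have h := (hlbarpos z).ne'
    rw [mul_sub, mul_add, Finset.mul_sum]
    congr 2
    · field_simp
    · exact Finset.sum_congr rfl fun y _ => by field_simp
  -- the separable form of the objective
  set G : (ℝ × (Z → ℝ)) × (∀ z : Z, ℝ × (S z → ℝ)) → ℝ := fun pq =>
    (f pq.1 - (l0 * pq.1.1 + ∑ z, lbar z * pq.1.2 z))
      + ∑ z, lbar z * (g z (pq.2 z)
          - ((lZ z / lbar z) * (pq.2 z).1 + ∑ y, (lS z y / lbar z) * (pq.2 z).2 y)) with hG
  set F : (ℝ × (∀ z : Z, ℝ × (S z → ℝ))) → ℝ := fun K =>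
    f (K.1, fun z => g z (K.2 z))
      - (l0 * K.1 + ∑ z, (lZ z * (K.2 z).1 + ∑ y, lS z y * (K.2 z).2 y)) with hF
  have step1 : (⨆ K : ℝ × (∀ z : Z, ℝ × (S z → ℝ)), ((F K : ℝ) : EReal))
      = ⨆ pq : (ℝ × (Z → ℝ)) × (∀ z : Z, ℝ × (S z → ℝ)), ((G pq : ℝ) : EReal) := by
    refine le_antisymm (iSup_le fun K => ?_) (iSup_le fun pq => ?_)
    · refine le_iSup_of_le ((K.1, fun z => g z (K.2 z)), K.2) ?_
      apply EReal.coe_le_coe_iff.2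
      apply le_of_eq
      simp only [hF, hG]
      simp only [hmul]
      rw [Finset.sum_sub_distrib]
      ring
    · -- translation-invariance reparametrization
      set a := pq.1.1 with ha
      set v := pq.1.2 with hv
      set q := pq.2 with hq
      set c : Z → ℝ := fun z => v z - g z (q z) with hc
      refine le_iSup_of_le
        (a, fun z => ((q z).1 + c z, fun y => (q z).2 y + c z)) ?_
      apply EReal.coe_le_coe_iff.2
      apply le_of_eq
      have hgv : ∀ z : Z, g z ((q z).1 + c z, fun y => (q z).2 y + c z) = v z := by
        intro z
        rw [hgti z (q z).1 (q z).2 (c z)]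
        simp [hc]
      have hsum2 : ∀ z : Z,
          lZ z * ((q z).1 + c z) + ∑ y, lS z y * ((q z).2 y + c z)
            = (lZ z * (q z).1 + ∑ y, lS z y * (q z).2 y) + lbar z * c z := by
        intro z
        simp only [mul_add]
        rw [Finset.sum_add_distrib, ← Finset.sum_mul, hlbar z]
        ring
      simp only [hF, hG]
      simp only [hgv, hmul, hsum2]
      rw [Finset.sum_add_distrib, Finset.sum_sub_distrib]
      have hcsum : ∑ z, lbar z * c z = ∑ z, lbar z * v z - ∑ z, lbar z * g z (q z) := by
        rw [← Finset.sum_sub_distrib]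
        exact Finset.sum_congr rfl fun z _ => by rw [hc]; ring
      rw [hcsum]
      have hfp : f (a, fun z => v z) = f pq.1 := by
        rw [ha, hv]
      rw [hfp]
      ring
  have e2 := ereal_sum_iSup (Q := fun z => ℝ × (S z → ℝ)) Finset.univ
    (fun z q => lbar z * (g z q - ((lZ z / lbar z) * q.1 + ∑ y, (lS z y / lbar z) * q.2 y)))
  have e3 := ereal_sup_add_sup
    (fun p : ℝ × (Z → ℝ) => f p - (l0 * p.1 + ∑ z, lbar z * p.2 z))
    (fun q : ∀ z : Z, ℝ × (S z → ℝ) => ∑ z, lbar z *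
      (g z (q z) - ((lZ z / lbar z) * (q z).1 + ∑ y, (lS z y / lbar z) * (q z).2 y)))
  calc (⨆ K : ℝ × (∀ z : Z, ℝ × (S z → ℝ)), ((F K : ℝ) : EReal))
      = ⨆ pq : (ℝ × (Z → ℝ)) × (∀ z : Z, ℝ × (S z → ℝ)), ((G pq : ℝ) : EReal) := step1
    _ = (⨆ p : ℝ × (Z → ℝ), ((f p - (l0 * p.1 + ∑ z, lbar z * p.2 z) : ℝ) : EReal))
        + ⨆ q : ∀ z : Z, ℝ × (S z → ℝ), ((∑ z : Z, lbar z *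
            (g z (q z) - ((lZ z / lbar z) * (q z).1
              + ∑ y, (lS z y / lbar z) * (q z).2 y)) : ℝ) : EReal) := e3.symm
    _ = (⨆ p : ℝ × (Z → ℝ), ((f p - (l0 * p.1 + ∑ z, lbar z * p.2 z) : ℝ) : EReal))
        + ∑ z : Z, ⨆ q : ℝ × (S z → ℝ),
            ((lbar z * (g z q - ((lZ z / lbar z) * q.1
              + ∑ y, (lS z y / lbar z) * q.2 y)) : ℝ) : EReal) := by
          exact congrArg _ e2.symm
    _ = (⨆ p : ℝ × (Z → ℝ), ((f p - (l0 * p.1 + ∑ z, lbar z * p.2 z) : ℝ) : EReal))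
        + ∑ z : Z, ((lbar z : ℝ) : EReal)
            * (⨆ q : ℝ × (S z → ℝ),
                ((g z q - ((lZ z / lbar z) * q.1 + ∑ y, (lS z y / lbar z) * q.2 y) : ℝ) : EReal)) := by
          exact congrArg _ (Finset.sum_congr rfl fun z _ =>
            (ereal_mul_iSup (hlbarpos z) _).symm)
end

section
/- Let n ≥ 2 and let p ∈ ℝ^n be a probability vector with p_y > 0 for all y. Let U : ℝ → ℝ be differentiable with U'(x) > 0 for all x, and concave. For K ∈ ℝ^n let π(K) be the unique real number with U(π(K)) = Σ_y p_y U(K_y) (which exists since U is continuous and strictly increasing and Σ_y p_y U(K_y) lies between min_y U(K_y) and max_y U(K_y)). If π is translation-invariant, i.e. π(K + a·𝟙) = π(K) + a for all a ∈ ℝ and K ∈ ℝ^n, then there exists γ ≥ 0 such that U'(x) = U'(0) e^{−γ x} for every x ∈ ℝ. -/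
/-!
Differentiating `π(K + a𝟙) = π(K) + a` at `a = 0` shows that the marginal utility obeys the same
rule as the utility: `U'(π K) = Σ_y p_y U'(K_y)`. For the two-valued payoff `K = (x, y, …, y)`
write `m x y = π K` and `q = p_0`: then `m x y` lies strictly between `x` and `y`, and
`(U, U')(m x y)` is the `q`-average of `(U, U')(x)` and `(U, U')(y)`. Hence, on `[s, t]`, the set
where `(U, U')` lies on the chord through its values at `s` and `t` has no gaps; it is closed since
`U'`, a monotone function with the Darboux property, is continuous. So it is all of `[s, t]`:
`U' = α + β U`, i.e. `U'' = β U'`, which makes `U'` exponential, and concavity gives `β ≤ 0`.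
-/

open Set

section OrderTopology

variable {α β : Type*} [LinearOrder α] [TopologicalSpace α] [OrderTopology α]
  [LinearOrder β] [TopologicalSpace β] [OrderTopology β] [DenselyOrdered β]

theorem Monotone.continuous_of_ordConnected_range {f : α → β} (hf : Monotone f)
    (h : (range f).OrdConnected) : Continuous f := by
  have hg : Monotone (rangeFactorization f) := fun _ _ hxy => hf hxy
  exact continuous_subtype_val.comp (hg.continuous_of_surjective rangeFactorization_surjective)

theorem Antitone.continuous_of_ordConnected_range {f : α → β} (hf : Antitone f)
    (h : (range f).OrdConnected) : Continuous f :=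
  Monotone.continuous_of_ordConnected_range (β := βᵒᵈ) hf.dual_right h.dual

end OrderTopology

theorem IsClosed.Icc_subset_of_exists_between {α : Type*} [ConditionallyCompleteLinearOrder α]
    [TopologicalSpace α] [OrderTopology α] {C : Set α} (hC : IsClosed C) {a b : α}
    (ha : a ∈ C) (hb : b ∈ C) (hgap : ∀ x ∈ C, ∀ y ∈ C, x < y → ∃ z ∈ C, x < z ∧ z < y) :
    Icc a b ⊆ C := by
  intro l hl
  by_contra hlC
  have hbdd : BddAbove (C ∩ Iic l) := ⟨l, fun _ hz => hz.2⟩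
  have hbdd' : BddBelow (C ∩ Ici l) := ⟨l, fun _ hz => hz.2⟩
  have hx : sSup (C ∩ Iic l) ∈ C ∩ Iic l :=
    (hC.inter isClosed_Iic).csSup_mem ⟨a, ha, hl.1⟩ hbdd
  have hy : sInf (C ∩ Ici l) ∈ C ∩ Ici l :=
    (hC.inter isClosed_Ici).csInf_mem ⟨b, hb, hl.2⟩ hbdd'
  have hxl : sSup (C ∩ Iic l) < l := hx.2.lt_of_ne fun h => hlC (h ▸ hx.1)
  have hly : l < sInf (C ∩ Ici l) := hy.2.lt_of_ne' fun h => hlC (h ▸ hy.1)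
  obtain ⟨z, hzC, hxz, hzy⟩ := hgap _ hx.1 _ hy.1 (hxl.trans hly)
  rcases le_total z l with hzl | hlz
  · exact (le_csSup hbdd ⟨hzC, hzl⟩).not_gt hxz
  · exact (csInf_le hbdd' ⟨hzC, hlz⟩).not_gt hzy

theorem ConcaveOn.continuous_deriv {U : ℝ → ℝ} (hU : ConcaveOn ℝ univ U)
    (hd : Differentiable ℝ U) : Continuous (deriv U) := by
  refine Antitone.continuous_of_ordConnected_range (fun x y hxy => ?_) ?_
  · exact hU.antitoneOn_deriv (fun x _ => hd x) trivial trivial hxy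
  · rw [← image_univ]
    exact ordConnected_univ.image_deriv fun x _ => hd x

theorem eq_mul_exp_of_hasDerivAt {f : ℝ → ℝ} {c : ℝ} (hf : ∀ x, HasDerivAt f (c * f x) x)
    (x : ℝ) : f x = f 0 * Real.exp (c * x) := by
  have hg : ∀ z, HasDerivAt (fun z => f z * Real.exp (-(c * z))) 0 z := by
    intro z
    refine ((hf z).mul (((hasDerivAt_id' z).const_mul c).neg.exp)).congr_deriv ?_
    ring
  have := is_const_of_deriv_eq_zero (fun z => (hg z).differentiableAt) (fun z => (hg z).deriv) x 0
  simp only [mul_zero, neg_zero, Real.exp_zero, mul_one] at this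
  rw [← this, mul_assoc, ← Real.exp_add, neg_add_cancel, Real.exp_zero, mul_one]

theorem deriv_eq_of_forall_add_eq {U : ℝ → ℝ} (hU : Differentiable ℝ U) {q m x y : ℝ}
    (h : ∀ a, U (m + a) = q * U (x + a) + (1 - q) * U (y + a)) :
    deriv U m = q * deriv U x + (1 - q) * deriv U y := by
  have hshift : ∀ c, HasDerivAt (fun a => U (c + a)) (deriv U c) 0 := fun c =>
    HasDerivAt.comp_const_add c 0 (by simpa using (hU c).hasDerivAt)
  have hm := hshift m
  rw [funext h] at hm
  exact hm.unique (((hshift x).const_mul q).add ((hshift y).const_mul (1 - q)))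

section WeightedSum

variable {ι : Type*} [Fintype ι] {p : ι → ℝ}

theorem sum_mul_ite_eq [DecidableEq ι] (hp : ∑ y, p y = 1) (g : ℝ → ℝ) (i : ι) (A B : ℝ) :
    ∑ y, p y * g (if y = i then A else B) = p i * g A + (1 - p i) * g B := by
  rw [Fintype.sum_eq_add_sum_compl i, if_pos rfl, ← hp, Fintype.sum_eq_add_sum_compl i,
    add_sub_cancel_left, Finset.sum_mul]
  congr 1
  exact Finset.sum_congr rfl fun y hy => by rw [if_neg (by simpa using hy)]

theorem lt_one_of_pos_of_ne (hp : ∀ y, 0 < p y) (hpsum : ∑ y, p y = 1) {i j : ι} (hij : i ≠ j) :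
    p i < 1 := by
  classical
  have : p i + p j ≤ 1 := by
    rw [← hpsum, ← Finset.sum_pair hij]
    exact Finset.sum_le_univ_sum_of_nonneg fun y => (hp y).le
  linarith [hp j]

end WeightedSum

section Chord

variable {U f : ℝ → ℝ} {m : ℝ → ℝ → ℝ} {q : ℝ}
  (hU : StrictMono U) (hUc : Continuous U) (hfc : Continuous f) (hq0 : 0 < q) (hq1 : q < 1)
  (hUm : ∀ x y, U (m x y) = q * U x + (1 - q) * U y)
  (hfm : ∀ x y, f (m x y) = q * f x + (1 - q) * f y)
include hU hq0 hq1 hUm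

theorem mem_Ioo_of_apply_eq_weightedMean {x y : ℝ} (hxy : x < y) : m x y ∈ Ioo x y := by
  have hUxy := hU hxy
  constructor
  · exact hU.lt_iff_lt.1 (by rw [hUm]; nlinarith)
  · exact hU.lt_iff_lt.1 (by rw [hUm]; nlinarith)

include hUc hfc hfm

theorem exists_chord_slope {s t : ℝ} (hst : s < t) :
    ∃ k, ∀ x ∈ Icc s t, f x = f s + k * (U x - U s) := by
  have hUst : U t - U s ≠ 0 := (sub_pos.2 (hU hst)).ne'
  set k := (f t - f s) / (U t - U s)
  suffices hsub : Icc s t ⊆ Icc s t ∩ {x | f x = f s + k * (U x - U s)} from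
    ⟨k, fun x hx => (hsub hx).2⟩
  refine IsClosed.Icc_subset_of_exists_between
    (isClosed_Icc.inter (isClosed_eq hfc (by fun_prop))) ⟨left_mem_Icc.2 hst.le, by simp⟩
    ⟨right_mem_Icc.2 hst.le, by simp [k, div_mul_cancel₀ _ hUst]⟩ ?_
  rintro x ⟨hxI, hx⟩ y ⟨hyI, hy⟩ hxy
  obtain ⟨hxm, hmy⟩ := mem_Ioo_of_apply_eq_weightedMean hU hq0 hq1 hUm hxy
  refine ⟨m x y, ⟨⟨hxI.1.trans hxm.le, hmy.le.trans hyI.2⟩, ?_⟩, hxm, hmy⟩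
  simp only [mem_ofPred_eq] at hx hy ⊢
  rw [hfm, hUm, hx, hy]
  ring

theorem exists_eq_add_mul_sub :
    ∃ β, ∀ x, f x = f 0 + β * (U x - U 0) := by
  have hU01 : U 1 - U 0 ≠ 0 := (sub_pos.2 (hU zero_lt_one)).ne'
  refine ⟨(f 1 - f 0) / (U 1 - U 0), fun x => ?_⟩
  have hst : min x 0 < max x 1 :=
    (min_le_right x 0).trans_lt (zero_lt_one.trans_le (le_max_right x 1))
  obtain ⟨k, hk⟩ := exists_chord_slope hU hUc hfc hq0 hq1 hUm hfm hst
  have h0 := hk 0 ⟨min_le_right x 0, zero_le_one.trans (le_max_right x 1)⟩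
  have h1 := hk 1 ⟨(min_le_right x 0).trans zero_le_one, le_max_right x 1⟩
  have hx := hk x ⟨min_le_left x 0, le_max_left x 1⟩
  have hkβ : k = (f 1 - f 0) / (U 1 - U 0) := by
    rw [eq_div_iff hU01]
    linear_combination h0 - h1
  rw [← hkβ]
  linear_combination hx - h0

end Chord

/-- if the certainty equivalent `π` under a differentiable, strictly increasing
(`U' > 0`), concave utility `U` (i.e. `U(π(K)) = Σ_y p_y U(K_y)`) is translation-invariant, then
the marginal utility is exponential: `U'(x) = U'(0) e^{−γ x}` for some `γ ≥ 0`. -/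
theorem stmt_10 (n : ℕ) (hn : 2 ≤ n)
    (p : Fin n → ℝ) (hp : ∀ y, 0 < p y) (hpsum : ∑ y, p y = 1)
    (U : ℝ → ℝ) (hU : Differentiable ℝ U) (hU' : ∀ x, 0 < deriv U x)
    (hUconc : ConcaveOn ℝ Set.univ U)
    (π : (Fin n → ℝ) → ℝ)
    (hπ : ∀ K : Fin n → ℝ, U (π K) = ∑ y, p y * U (K y))
    (hti : ∀ (K : Fin n → ℝ) (a : ℝ), π (fun y => K y + a) = π K + a) :
    ∃ γ : ℝ, 0 ≤ γ ∧ ∀ x : ℝ, deriv U x = deriv U 0 * Real.exp (-γ * x) := by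
  let i : Fin n := ⟨0, by omega⟩
  have hq1 : p i < 1 := lt_one_of_pos_of_ne hp hpsum (j := ⟨1, by omega⟩) (by simp [i, Fin.ext_iff])
  let m : ℝ → ℝ → ℝ := fun A B => π fun y => if y = i then A else B
  have hshift : ∀ A B a, U (m A B + a) = p i * U (A + a) + (1 - p i) * U (B + a) := by
    intro A B a
    rw [← hti, hπ, ← sum_mul_ite_eq hpsum U i]
    simp only [ite_add]
  have hUm : ∀ A B, U (m A B) = p i * U A + (1 - p i) * U B := fun A B => by
    simpa using hshift A B 0
  have hUmono : StrictMono U := strictMono_of_deriv_pos hU'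
  obtain ⟨β, hβ⟩ := exists_eq_add_mul_sub hUmono hU.continuous (hUconc.continuous_deriv hU)
    (hp i) hq1 hUm fun A B => deriv_eq_of_forall_add_eq hU (hshift A B)
  have hβ0 : β ≤ 0 := by
    have h10 := hUconc.antitoneOn_deriv (fun x _ => hU x) trivial trivial zero_le_one
    have hU01 := hUmono zero_lt_one
    rw [hβ 1] at h10
    nlinarith
  have hode : ∀ x, HasDerivAt (deriv U) (β * deriv U x) x := by
    intro x
    have h := (((hU x).hasDerivAt.sub_const (U 0)).const_mul β).const_add (deriv U 0)
    rwa [← funext hβ] at h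
  exact ⟨-β, neg_nonneg.2 hβ0, fun x => by rw [neg_neg]; exact eq_mul_exp_of_hasDerivAt hode x⟩
end

section
/- Let n ≥ 1, J ≥ 1, γ_1, …, γ_J > 0, and let p^1, …, p^J ∈ ℝ^n be probability vectors with p^j_y > 0 for all j, y. Set Γ = (Σ_{j=1}^J 1/γ_j)^{−1}, A = ( Σ_y Π_{i=1}^J (p^i_y)^{Γ/γ_i} )^{−1}, and P_y = A · Π_{i=1}^J (p^i_y)^{Γ/γ_i}. Then P is a probability vector with P_y > 0 for all y, and for every probability vector λ ∈ ℝ^n: Σ_{j=1}^J (1/γ_j) H(λ∥p^j) = (1/Γ) H(λ∥P) + (1/Γ) log A. -/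
/-! Write `w j = 1/γ j` and `S = Σ_j w j = 1/Γ`. Splitting `log (λ_y / q_y) = log λ_y - log q_y`
turns `Σ_j w_j H(λ∥p^j)` into `S Σ_y λ_y log λ_y - Σ_y λ_y Σ_j w_j log p^j_y`, so the
aggregate only sees the weighted geometric mean of the beliefs. Its normalisation `P` has
`log P_y = log A + Γ Σ_j w_j log p^j_y`, and since `Σ_y λ_y = 1` the constant `log A`
passes out of `H(λ∥P)` unchanged. -/

open Finset Real

namespace EntropicAggregation

variable {ι κ : Type*} [Fintype ι] [Fintype κ]

noncomputable def relEntropy (l q : ι → ℝ) : ℝ := ∑ y, l y * log (l y / q y)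

theorem mul_log_div_eq_sub (x : ℝ) {y : ℝ} (hy : y ≠ 0) :
    x * log (x / y) = x * log x - x * log y := by
  rcases eq_or_ne x 0 with rfl | hx
  · simp
  · rw [log_div hx hy, mul_sub]

theorem relEntropy_eq_sub (l : ι → ℝ) {q : ι → ℝ} (hq : ∀ y, q y ≠ 0) :
    relEntropy l q = ∑ y, l y * log (l y) - ∑ y, l y * log (q y) := by
  rw [relEntropy, ← sum_sub_distrib]
  exact sum_congr rfl fun y _ => mul_log_div_eq_sub (l y) (hq y)

theorem sum_mul_relEntropy (w : κ → ℝ) (l : ι → ℝ) {q : κ → ι → ℝ}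
    (hq : ∀ j y, q j y ≠ 0) :
    ∑ j, w j * relEntropy l (q j)
      = (∑ j, w j) * ∑ y, l y * log (l y) - ∑ y, l y * ∑ j, w j * log (q j y) := by
  simp only [relEntropy_eq_sub l (hq _), mul_sub, sum_sub_distrib, sum_mul, mul_sum]
  congr 1 <;> exact sum_comm.trans (sum_congr rfl fun y _ => sum_congr rfl fun j _ => by ring)

theorem relEntropy_eq_of_log_eq {l q L : ι → ℝ} {c : ℝ} (hq : ∀ y, q y ≠ 0)
    (hlog : ∀ y, log (q y) = c + L y) (hl : ∑ y, l y = 1) :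
    relEntropy l q = ∑ y, l y * log (l y) - c - ∑ y, l y * L y := by
  have hcross : ∑ y, l y * log (q y) = c + ∑ y, l y * L y := by
    simp only [hlog, mul_add, sum_add_distrib, ← sum_mul, hl, one_mul]
  rw [relEntropy_eq_sub l hq, hcross, sub_add_eq_sub_sub]

theorem log_mul_prod_rpow {A : ℝ} (hA : A ≠ 0) {x e : κ → ℝ} (hx : ∀ i, 0 < x i) :
    log (A * ∏ i, x i ^ e i) = log A + ∑ i, e i * log (x i) := by
  rw [log_mul hA (prod_pos fun i _ => rpow_pos_of_pos (hx i) _).ne',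
    log_prod fun i _ => (rpow_pos_of_pos (hx i) _).ne']
  simp only [log_rpow (hx _)]

/-- The zero-sum case is `J = 0`, where `Γ = 0⁻¹ = 0`. -/
theorem sum_mul_inv_sum_mul_sum {w : κ → ℝ} (hw : ∀ i, 0 ≤ w i) (x : κ → ℝ) :
    (∑ i, w i) * ((∑ i, w i)⁻¹ * ∑ i, w i * x i) = ∑ i, w i * x i := by
  rcases eq_or_ne (∑ i, w i) 0 with hS | hS
  · have hw0 := (sum_eq_zero_iff_of_nonneg fun i _ => hw i).1 hS
    rw [hS, sum_eq_zero fun i hi => by rw [hw0 i hi, zero_mul], mul_zero, zero_mul]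
  · exact mul_inv_cancel_left₀ hS _

end EntropicAggregation

open EntropicAggregation

theorem stmt_16_general (n J : ℕ) (hn : 1 ≤ n)
    (γ : Fin J → ℝ) (hγ : ∀ j, 0 < γ j)
    (p : Fin J → (Fin n → ℝ)) (hp : ∀ j y, 0 < p j y)
    (Γ : ℝ) (hΓ : Γ = (∑ j, 1 / γ j)⁻¹)
    (A : ℝ) (hA : A = (∑ y, ∏ i, (p i y) ^ (Γ / γ i))⁻¹)
    (P : Fin n → ℝ) (hP : ∀ y, P y = A * ∏ i, (p i y) ^ (Γ / γ i)) :
    ((∀ y, 0 < P y) ∧ ∑ y, P y = 1) ∧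
      ∀ l : Fin n → ℝ, (∀ y, 0 ≤ l y) → (∑ y, l y = 1) →
        ∑ j, (1 / γ j) * (∑ y, l y * Real.log (l y / p j y))
          = (1 / Γ) * (∑ y, l y * Real.log (l y / P y)) + (1 / Γ) * Real.log A := by
  have : Nonempty (Fin n) := Fin.pos_iff_nonempty.mp hn
  have hprod : ∀ y, 0 < ∏ i, p i y ^ (Γ / γ i) := fun y =>
    prod_pos fun i _ => rpow_pos_of_pos (hp i y) _
  have hnorm : 0 < ∑ y, ∏ i, p i y ^ (Γ / γ i) := sum_pos (fun y _ => hprod y) univ_nonempty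
  have hApos : 0 < A := hA ▸ inv_pos.mpr hnorm
  have hPpos : ∀ y, 0 < P y := fun y => hP y ▸ mul_pos hApos (hprod y)
  have hPsum : ∑ y, P y = 1 := by
    simp only [hP, ← mul_sum, hA]
    exact inv_mul_cancel₀ hnorm.ne'
  refine ⟨⟨hPpos, hPsum⟩, fun l _ hl => ?_⟩
  have hS : 1 / Γ = ∑ j, 1 / γ j := by rw [hΓ, one_div, inv_inv]
  have hlogP : ∀ y, log (P y) = log A + Γ * ∑ i, 1 / γ i * log (p i y) := fun y => by
    rw [hP, log_mul_prod_rpow hApos.ne' (hp · y), mul_sum]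
    simp only [div_eq_mul_one_div Γ, mul_assoc]
  have hpool : (1 / Γ) * ∑ y, l y * (Γ * ∑ i, 1 / γ i * log (p i y))
      = ∑ y, l y * ∑ i, 1 / γ i * log (p i y) := by
    rw [mul_sum]
    refine sum_congr rfl fun y _ => ?_
    rw [mul_left_comm, hS, hΓ, sum_mul_inv_sum_mul_sum fun i => (one_div_pos.2 (hγ i)).le]
  change ∑ j, 1 / γ j * relEntropy l (p j) = 1 / Γ * relEntropy l P + 1 / Γ * log A
  rw [sum_mul_relEntropy _ l fun j y => (hp j y).ne',
    relEntropy_eq_of_log_eq (fun y => (hPpos y).ne') hlogP hl, ← hS]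
  linear_combination hpool

/-- aggregation of dual entropic valuations.  With `Γ = (Σ_j 1/γ_j)⁻¹`,
`A = (Σ_y Π_i (p^i_y)^{Γ/γ_i})⁻¹` and `P_y = A Π_i (p^i_y)^{Γ/γ_i}`, the vector `P` is a
probability vector with positive entries and, for every probability vector `λ`,
`Σ_j (1/γ_j) H(λ∥p^j) = (1/Γ) H(λ∥P) + (1/Γ) log A`. -/
theorem stmt_16 (n J : ℕ) (hn : 1 ≤ n) (hJ : 1 ≤ J)
    (γ : Fin J → ℝ) (hγ : ∀ j, 0 < γ j)
    (p : Fin J → (Fin n → ℝ)) (hp : ∀ j y, 0 < p j y) (hpsum : ∀ j, ∑ y, p j y = 1)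
    (Γ : ℝ) (hΓ : Γ = (∑ j, 1 / γ j)⁻¹)
    (A : ℝ) (hA : A = (∑ y, ∏ i, (p i y) ^ (Γ / γ i))⁻¹)
    (P : Fin n → ℝ) (hP : ∀ y, P y = A * ∏ i, (p i y) ^ (Γ / γ i)) :
    ((∀ y, 0 < P y) ∧ ∑ y, P y = 1) ∧
      ∀ l : Fin n → ℝ, (∀ y, 0 ≤ l y) → (∑ y, l y = 1) →
        ∑ j, (1 / γ j) * (∑ y, l y * Real.log (l y / p j y))
          = (1 / Γ) * (∑ y, l y * Real.log (l y / P y)) + (1 / Γ) * Real.log A :=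
  stmt_16_general n J hn γ hγ p hp Γ hΓ A hA P hP
end

section
/- Let n ≥ 1, J ≥ 1, γ_1, …, γ_J > 0, and let p^1, …, p^J ∈ ℝ^n be probability vectors with p^j_y > 0 for all j, y. Set Γ = (Σ_j 1/γ_j)^{−1}, A = ( Σ_y Π_i (p^i_y)^{Γ/γ_i} )^{−1}, P_y = A · Π_i (p^i_y)^{Γ/γ_i}, and let π_{γ_j, p^j} denote the entropic valuations. Then for every K ∈ ℝ^n: sup { Σ_{j=1}^J π_{γ_j,p^j}(K^j) : Σ_j K^j = K } = (1/Γ) log A + π_{Γ,P}(K), and this supremum is attained at the allocation K^j given by K^j_y = (Γ/γ_j) K_y + (1/γ_j) log(p^j_y / P_y) + (1/γ_j) log A, which satisfies Σ_{j=1}^J K^j = K. -/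
/-!
Write `w_j = Γ / γ_j`, so that the `w_j` are weights summing to one, and let
`Q_y = ∏_j (p^j_y)^{w_j} = P_y / A` be the unnormalised weighted geometric mean of the beliefs.
For any allocation `Σ_j K^j = K`, the finite Hölder inequality with exponents `w_j` gives
`Σ_y Q_y e^{-Γ K_y} = Σ_y ∏_j (p^j_y e^{-γ_j K^j_y})^{w_j} ≤ ∏_j (Σ_y p^j_y e^{-γ_j K^j_y})^{w_j}`,
and taking `-(1/Γ) log` turns this into `Σ_j π_{γ_j,p^j}(K^j) ≤ π_{Γ,Q}(K)`.
The allocation `K^j = w_j K + (1/γ_j) log (p^j / Q)` makes every factor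
`p^j_y e^{-γ_j K^j_y}` equal to `Q_y e^{-Γ K_y}`, which is the equality case.
Finally `π_{Γ,Q} = (1/Γ) log A + π_{Γ,P}` because `P = A Q`.
-/

open Real Finset

theorem Real.sum_prod_rpow_le_prod_sum_rpow {ι κ : Type*} [Fintype ι] [Fintype κ] [Nonempty κ]
    (w : ι → ℝ) (hw : ∀ i, 0 ≤ w i) (hw1 : ∑ i, w i = 1)
    (a : ι → κ → ℝ) (ha : ∀ i k, 0 < a i k) :
    ∑ k, ∏ i, a i k ^ w i ≤ ∏ i, (∑ k, a i k) ^ w i := by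
  have hT : ∀ i, 0 < ∑ k, a i k := fun i => sum_pos (fun k _ => ha i k) univ_nonempty
  have hprod : 0 ≤ ∏ i, (∑ k, a i k) ^ w i := prod_nonneg fun i _ => rpow_nonneg (hT i).le _
  have hmean : ∀ i, ∑ k, w i * (a i k / ∑ k, a i k) = w i := fun i => by
    rw [← mul_sum, ← sum_div, div_self (hT i).ne', mul_one]
  calc ∑ k, ∏ i, a i k ^ w i
      = ∑ k, (∏ i, (∑ k, a i k) ^ w i) * ∏ i, (a i k / ∑ k, a i k) ^ w i := by
        refine sum_congr rfl fun k _ => ?_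
        rw [← prod_mul_distrib]
        refine prod_congr rfl fun i _ => ?_
        rw [← mul_rpow (hT i).le (div_pos (ha i k) (hT i)).le, mul_div_cancel₀ _ (hT i).ne']
    _ ≤ ∑ k, (∏ i, (∑ k, a i k) ^ w i) * ∑ i, w i * (a i k / ∑ k, a i k) := by
        refine sum_le_sum fun k _ => mul_le_mul_of_nonneg_left ?_ hprod
        exact geom_mean_le_arith_mean_weighted univ w _ (fun i _ => hw i) hw1
          fun i _ => (div_pos (ha i k) (hT i)).le
    _ = ∏ i, (∑ k, a i k) ^ w i := by
        rw [← mul_sum, sum_comm, sum_congr rfl fun i _ => hmean i, hw1, mul_one]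

noncomputable def entropicValuation {Y : Type*} [Fintype Y] (γ : ℝ) (p K : Y → ℝ) : ℝ :=
  -(1 / γ) * log (∑ y, p y * exp (-γ * K y))

section EntropicValuation

variable {Y : Type*} [Fintype Y]

theorem entropicValuation_div_smul {γ γ' : ℝ} (hγ : γ ≠ 0) (hγ' : γ' ≠ 0) (p K : Y → ℝ) :
    entropicValuation γ p ((γ' / γ) • K) = γ' / γ * entropicValuation γ' p K := by
  have hexp : ∀ y, -γ * ((γ' / γ) • K) y = -γ' * K y := fun y => by
    simp only [Pi.smul_apply, smul_eq_mul]
    field_simp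
  simp only [entropicValuation, hexp]
  field_simp

theorem entropicValuation_add_log_div {γ : ℝ} (hγ : γ ≠ 0) {p q : Y → ℝ}
    (hp : ∀ y, 0 < p y) (hq : ∀ y, 0 < q y) (K : Y → ℝ) :
    entropicValuation γ p (K + fun y => 1 / γ * log (p y / q y)) = entropicValuation γ q K := by
  unfold entropicValuation
  congr 2
  refine sum_congr rfl fun y _ => ?_
  have hexp : -γ * (K + fun y => 1 / γ * log (p y / q y)) y = -γ * K y - log (p y / q y) := by
    simp only [Pi.add_apply]
    field_simp
    ring
  rw [hexp, exp_sub, exp_log (div_pos (hp y) (hq y))]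
  field_simp [(hp y).ne']

theorem entropicValuation_smul_measure [Nonempty Y] (γ : ℝ) {c : ℝ} (hc : 0 < c) {q : Y → ℝ}
    (hq : ∀ y, 0 < q y) (K : Y → ℝ) :
    entropicValuation γ (c • q) K = -(1 / γ) * log c + entropicValuation γ q K := by
  have hZ : 0 < ∑ y, q y * exp (-γ * K y) :=
    sum_pos (fun y _ => mul_pos (hq y) (exp_pos _)) univ_nonempty
  simp only [entropicValuation, Pi.smul_apply, smul_eq_mul, mul_assoc, ← mul_sum]
  rw [log_mul hc.ne' hZ.ne']
  ring

end EntropicValuation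

section RiskSharing

variable {ι Y : Type*} [Fintype ι] (γ : ι → ℝ) (p : ι → Y → ℝ)

noncomputable def aggregateRiskAversion : ℝ := (∑ i, 1 / γ i)⁻¹

noncomputable def aggregateBelief (y : Y) : ℝ := ∏ i, p i y ^ (aggregateRiskAversion γ / γ i)

noncomputable def optimalAllocation (K : Y → ℝ) (i : ι) : Y → ℝ :=
  fun y => aggregateRiskAversion γ / γ i * K y + 1 / γ i * log (p i y / aggregateBelief γ p y)

variable {γ p}

theorem aggregateRiskAversion_pos [Nonempty ι] (hγ : ∀ i, 0 < γ i) :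
    0 < aggregateRiskAversion γ :=
  inv_pos.mpr (sum_pos (fun i _ => one_div_pos.mpr (hγ i)) univ_nonempty)

theorem sum_aggregateRiskAversion_div [Nonempty ι] (hγ : ∀ i, 0 < γ i) :
    ∑ i, aggregateRiskAversion γ / γ i = 1 := by
  simp_rw [div_eq_mul_one_div (aggregateRiskAversion γ), ← mul_sum]
  exact inv_mul_cancel₀ (inv_pos.mp (aggregateRiskAversion_pos hγ)).ne'

variable (γ) in
theorem aggregateBelief_pos (hp : ∀ i y, 0 < p i y) (y : Y) : 0 < aggregateBelief γ p y :=
  prod_pos fun i _ => rpow_pos_of_pos (hp i y) _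

theorem log_aggregateBelief (hp : ∀ i y, 0 < p i y) (y : Y) :
    log (aggregateBelief γ p y) = ∑ i, aggregateRiskAversion γ / γ i * log (p i y) := by
  rw [aggregateBelief, log_prod fun i _ => (rpow_pos_of_pos (hp i y) _).ne']
  exact sum_congr rfl fun i _ => log_rpow (hp i y) _

theorem sum_mul_log_div_aggregateBelief [Nonempty ι] (hγ : ∀ i, 0 < γ i)
    (hp : ∀ i y, 0 < p i y) (y : Y) :
    ∑ i, 1 / γ i * log (p i y / aggregateBelief γ p y) = 0 := by
  simp_rw [log_div (hp _ y).ne' (aggregateBelief_pos γ hp y).ne', mul_sub, sum_sub_distrib,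
    ← sum_mul, log_aggregateBelief hp, mul_sum]
  have hsum : ∑ i, 1 / γ i = 1 / aggregateRiskAversion γ := by
    rw [aggregateRiskAversion, inv_eq_one_div, one_div_one_div]
  rw [hsum, sub_eq_zero]
  refine sum_congr rfl fun i _ => ?_
  field_simp [(aggregateRiskAversion_pos hγ).ne']

theorem sum_optimalAllocation [Nonempty ι] (hγ : ∀ i, 0 < γ i) (hp : ∀ i y, 0 < p i y)
    (K : Y → ℝ) : ∑ i, optimalAllocation γ p K i = K := by
  funext y
  simp only [Finset.sum_apply, optimalAllocation, sum_add_distrib, ← sum_mul,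
    sum_aggregateRiskAversion_div hγ, sum_mul_log_div_aggregateBelief hγ hp, one_mul, add_zero]

theorem entropicValuation_optimalAllocation [Fintype Y] [Nonempty ι] (hγ : ∀ i, 0 < γ i)
    (hp : ∀ i y, 0 < p i y) (K : Y → ℝ) (i : ι) :
    entropicValuation (γ i) (p i) (optimalAllocation γ p K i)
      = aggregateRiskAversion γ / γ i
          * entropicValuation (aggregateRiskAversion γ) (aggregateBelief γ p) K := by
  change entropicValuation (γ i) (p i)
    ((aggregateRiskAversion γ / γ i) • K + fun y => 1 / γ i * log (p i y / aggregateBelief γ p y))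
      = _
  rw [entropicValuation_add_log_div (hγ i).ne' (hp i) (aggregateBelief_pos γ hp),
    entropicValuation_div_smul (hγ i).ne' (aggregateRiskAversion_pos hγ).ne']

theorem sum_entropicValuation_optimalAllocation [Fintype Y] [Nonempty ι] (hγ : ∀ i, 0 < γ i)
    (hp : ∀ i y, 0 < p i y) (K : Y → ℝ) :
    ∑ i, entropicValuation (γ i) (p i) (optimalAllocation γ p K i)
      = entropicValuation (aggregateRiskAversion γ) (aggregateBelief γ p) K := by
  simp_rw [entropicValuation_optimalAllocation hγ hp, ← sum_mul,
    sum_aggregateRiskAversion_div hγ, one_mul]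

theorem prod_rpow_eq_aggregateBelief_mul_exp (hγ : ∀ i, 0 < γ i) (Ks : ι → Y → ℝ) {y : Y}
    (hp : ∀ i, 0 ≤ p i y) :
    ∏ i, (p i y * exp (-γ i * Ks i y)) ^ (aggregateRiskAversion γ / γ i)
      = aggregateBelief γ p y * exp (-aggregateRiskAversion γ * (∑ i, Ks i) y) := by
  have hexp : ∀ i, exp (-γ i * Ks i y) ^ (aggregateRiskAversion γ / γ i)
      = exp (-aggregateRiskAversion γ * Ks i y) := fun i => by
    rw [← exp_mul]
    congr 1
    field_simp [(hγ i).ne']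
  simp only [mul_rpow (hp _) (exp_pos _).le, prod_mul_distrib, hexp, ← exp_sum, ← mul_sum,
    Finset.sum_apply]
  rfl

theorem sum_entropicValuation_le [Fintype Y] [Nonempty ι] [Nonempty Y] (hγ : ∀ i, 0 < γ i)
    (hp : ∀ i y, 0 < p i y) (Ks : ι → Y → ℝ) :
    ∑ i, entropicValuation (γ i) (p i) (Ks i)
      ≤ entropicValuation (aggregateRiskAversion γ) (aggregateBelief γ p) (∑ i, Ks i) := by
  have hΓ := aggregateRiskAversion_pos hγ
  have hZ : ∀ i, 0 < ∑ y, p i y * exp (-γ i * Ks i y) := fun i =>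
    sum_pos (fun y _ => mul_pos (hp i y) (exp_pos _)) univ_nonempty
  have holder := sum_prod_rpow_le_prod_sum_rpow (fun i => aggregateRiskAversion γ / γ i)
    (fun i => (div_pos hΓ (hγ i)).le) (sum_aggregateRiskAversion_div hγ)
    (fun i y => p i y * exp (-γ i * Ks i y)) fun i y => mul_pos (hp i y) (exp_pos _)
  simp only [prod_rpow_eq_aggregateBelief_mul_exp hγ Ks fun i => (hp i _).le] at holder
  have hlog : log (∑ y, aggregateBelief γ p y * exp (-aggregateRiskAversion γ * (∑ i, Ks i) y))
      ≤ ∑ i, aggregateRiskAversion γ / γ i * log (∑ y, p i y * exp (-γ i * Ks i y)) := by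
    refine (log_le_log (sum_pos (fun y _ => mul_pos (aggregateBelief_pos γ hp y) (exp_pos _))
      univ_nonempty) holder).trans_eq ?_
    rw [log_prod fun i _ => (rpow_pos_of_pos (hZ i) _).ne']
    exact sum_congr rfl fun i _ => log_rpow (hZ i) _
  calc ∑ i, entropicValuation (γ i) (p i) (Ks i)
      = -(1 / aggregateRiskAversion γ)
          * ∑ i, aggregateRiskAversion γ / γ i * log (∑ y, p i y * exp (-γ i * Ks i y)) := by
        rw [mul_sum]
        refine sum_congr rfl fun i _ => ?_
        simp only [entropicValuation]
        field_simp [(hγ i).ne']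
    _ ≤ _ := mul_le_mul_of_nonpos_left hlog (by simp [hΓ.le])

end RiskSharing

theorem stmt_18_general (n J : ℕ) (hn : 1 ≤ n) (hJ : 1 ≤ J)
    (γ : Fin J → ℝ) (hγ : ∀ j, 0 < γ j)
    (p : Fin J → (Fin n → ℝ)) (hp : ∀ j y, 0 < p j y)
    (Γ : ℝ) (hΓ : Γ = (∑ j, 1 / γ j)⁻¹)
    (A : ℝ) (hA : A = (∑ y, ∏ i, (p i y) ^ (Γ / γ i))⁻¹)
    (P : Fin n → ℝ) (hP : ∀ y, P y = A * ∏ i, (p i y) ^ (Γ / γ i))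
    (K : Fin n → ℝ)
    (Kopt : Fin J → (Fin n → ℝ))
    (hKopt : ∀ j y, Kopt j y
      = (Γ / γ j) * K y + (1 / γ j) * Real.log (p j y / P y) + (1 / γ j) * Real.log A) :
    (∑ j, Kopt j = K) ∧
      (∑ j, -(1 / γ j) * Real.log (∑ y, p j y * Real.exp (-(γ j) * Kopt j y))
        = (1 / Γ) * Real.log A
          + -(1 / Γ) * Real.log (∑ y, P y * Real.exp (-Γ * K y))) ∧
      (∀ Ks : Fin J → (Fin n → ℝ), (∑ j, Ks j = K) →
        ∑ j, -(1 / γ j) * Real.log (∑ y, p j y * Real.exp (-(γ j) * Ks j y))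
          ≤ (1 / Γ) * Real.log A
            + -(1 / Γ) * Real.log (∑ y, P y * Real.exp (-Γ * K y))) := by
  have : Nonempty (Fin J) := Fin.pos_iff_nonempty.mp hJ
  have : Nonempty (Fin n) := Fin.pos_iff_nonempty.mp hn
  obtain rfl : Γ = aggregateRiskAversion γ := hΓ
  have hQ := aggregateBelief_pos γ hp
  have hA : 0 < A := hA ▸ inv_pos.mpr (sum_pos (fun y _ => hQ y) univ_nonempty)
  have hPQ : P = A • aggregateBelief γ p := funext hP
  have hKopt : Kopt = optimalAllocation γ p K := by
    funext j y
    rw [hKopt, optimalAllocation, hPQ, Pi.smul_apply, smul_eq_mul, add_assoc, ← mul_add,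
      log_div (hp j y).ne' (mul_pos hA (hQ y)).ne', log_mul hA.ne' (hQ y).ne',
      log_div (hp j y).ne' (hQ y).ne']
    ring
  have hvalue : 1 / aggregateRiskAversion γ * log A
      + entropicValuation (aggregateRiskAversion γ) P K
        = entropicValuation (aggregateRiskAversion γ) (aggregateBelief γ p) K := by
    rw [hPQ, entropicValuation_smul_measure _ hA hQ]
    ring
  subst hKopt
  refine ⟨sum_optimalAllocation hγ hp K, ?_, fun Ks hKs => ?_⟩
  · exact (sum_entropicValuation_optimalAllocation hγ hp K).trans hvalue.symm
  · subst hKs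
    exact (sum_entropicValuation_le hγ hp Ks).trans_eq hvalue.symm

/-- optimal risk transfer among entropic subsidiaries.  The risk-sharing value
`sup { Σ_j π_{γ_j,p^j}(K^j) : Σ_j K^j = K }` equals `(1/Γ) log A + π_{Γ,P}(K)`, and the supremum
is attained at the explicit allocation
`K^j_y = (Γ/γ_j) K_y + (1/γ_j) log(p^j_y/P_y) + (1/γ_j) log A`, which sums to `K`. -/
theorem stmt_18 (n J : ℕ) (hn : 1 ≤ n) (hJ : 1 ≤ J)
    (γ : Fin J → ℝ) (hγ : ∀ j, 0 < γ j)
    (p : Fin J → (Fin n → ℝ)) (hp : ∀ j y, 0 < p j y) (hpsum : ∀ j, ∑ y, p j y = 1)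
    (Γ : ℝ) (hΓ : Γ = (∑ j, 1 / γ j)⁻¹)
    (A : ℝ) (hA : A = (∑ y, ∏ i, (p i y) ^ (Γ / γ i))⁻¹)
    (P : Fin n → ℝ) (hP : ∀ y, P y = A * ∏ i, (p i y) ^ (Γ / γ i))
    (K : Fin n → ℝ)
    (Kopt : Fin J → (Fin n → ℝ))
    (hKopt : ∀ j y, Kopt j y
      = (Γ / γ j) * K y + (1 / γ j) * Real.log (p j y / P y) + (1 / γ j) * Real.log A) :
    (∑ j, Kopt j = K) ∧
      (∑ j, -(1 / γ j) * Real.log (∑ y, p j y * Real.exp (-(γ j) * Kopt j y))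
        = (1 / Γ) * Real.log A
          + -(1 / Γ) * Real.log (∑ y, P y * Real.exp (-Γ * K y))) ∧
      (∀ Ks : Fin J → (Fin n → ℝ), (∑ j, Ks j = K) →
        ∑ j, -(1 / γ j) * Real.log (∑ y, p j y * Real.exp (-(γ j) * Ks j y))
          ≤ (1 / Γ) * Real.log A
            + -(1 / Γ) * Real.log (∑ y, P y * Real.exp (-Γ * K y))) :=
  stmt_18_general n J hn hJ γ hγ p hp Γ hΓ A hA P hP K Kopt hKopt
end
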